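/- arXiv:2506.04476 — 6 statements merged into one kernel-verified Lean document; each statement's English description precedes it below -/
import Mathlib

section
/- Let C_{w,f} be a weighted composition operator on L^p(μ) (1 ≤ p < ∞), where f : X → X is bimeasurable, w : X → 𝕂 is measurable, multiplication by w maps L^p(μ) into itself, and there is c > 0 with ∫_B |w|^p dμ ≤ c μ(f(B)) for all measurable B. Then for every n ∈ ℕ, ‖(C_{w,f})^n‖ = sup over measurable sets B with 0 < μ(B) < ∞ of (μ_n(f^{-n}(B))/μ(B))^{1/p}, where μ_n(B) = ∫_B |w^{(n)}|^p dμ and w^{(n)} = (w∘f^{n-1})⋯(w∘f)·w. -/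
open MeasureTheory
open scoped ENNReal

/-!
By induction, `(T^n φ)(x) = φ(f^n x) · w^{(n)}(x)` almost everywhere, so
`‖T^n φ‖_p^p = ∫ |φ|^p dν_n` for the measure `ν_n(B) = μ_n(f^{-n}(B))`. Iterating the hypothesis
on `w` gives `ν_n ≤ c^n μ`; in particular `ν_n ≪ μ`, which is what makes `φ ∘ f^n · w^{(n)}`
independent of the representative of `φ`. For any measure `ν ≤ K μ`, an operator with
`‖S φ‖_p^p = ∫ |φ|^p dν` has norm `sup (ν B / μ B)^{1/p}` over sets of finite positive measure:
indicators of such sets give the lower bound, and approximating `|φ|^p` by simple functions,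
whose nonzero level sets have finite measure, gives the upper bound.
-/

section MeasureComparison

variable {X : Type*} [MeasurableSpace X] {μ ν : Measure X} {K : ℝ≥0∞}

theorem MeasureTheory.SimpleFunc.lintegral_le_mul_of_measure_le (s : SimpleFunc X ℝ≥0∞)
    (hs : s.lintegral μ ≠ ⊤) (hνμ : ∀ A, MeasurableSet A → μ A < ⊤ → ν A ≤ K * μ A) :
    s.lintegral ν ≤ K * s.lintegral μ := by
  simp only [SimpleFunc.lintegral, Finset.mul_sum]
  refine Finset.sum_le_sum fun a ha => ?_
  rcases eq_or_ne a 0 with rfl | ha0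
  · simp
  have hfiber : μ (s ⁻¹' {a}) < ⊤ := by
    have hle : a * μ (s ⁻¹' {a}) ≤ s.lintegral μ :=
      Finset.single_le_sum (f := fun b => b * μ (s ⁻¹' {b})) (fun _ _ => zero_le) ha
    exact ENNReal.lt_top_of_mul_ne_top_right (ne_top_of_le_ne_top hs hle) ha0
  calc a * ν (s ⁻¹' {a}) ≤ a * (K * μ (s ⁻¹' {a})) := by
        gcongr; exact hνμ _ (s.measurableSet_fiber a) hfiber
    _ = K * (a * μ (s ⁻¹' {a})) := mul_left_comm _ _ _

theorem MeasureTheory.lintegral_le_mul_of_measure_le (hac : ν ≪ μ) {g : X → ℝ≥0∞} (hg : AEMeasurable g μ)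
    (hg_fin : ∫⁻ x, g x ∂μ ≠ ⊤) (hνμ : ∀ A, MeasurableSet A → μ A < ⊤ → ν A ≤ K * μ A) :
    ∫⁻ x, g x ∂ν ≤ K * ∫⁻ x, g x ∂μ := by
  rw [lintegral_congr_ae hg.ae_eq_mk] at hg_fin ⊢
  rw [lintegral_congr_ae (hac.ae_eq hg.ae_eq_mk),
    lintegral_eq_iSup_eapprox_lintegral hg.measurable_mk]
  refine iSup_le fun k => ?_
  have hk := lintegral_eapprox_le_lintegral (μ := μ) hg.measurable_mk k
  exact ((SimpleFunc.eapprox _ k).lintegral_le_mul_of_measure_le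
    (ne_top_of_le_ne_top hg_fin hk) hνμ).trans (by gcongr)

end MeasureComparison

section LpNorm

variable {X : Type*} [MeasurableSpace X] {μ ν : Measure X} {p : ℝ} [Fact (1 ≤ ENNReal.ofReal p)]

theorem pos_of_fact_one_le_ofReal (p : ℝ) [Fact (1 ≤ ENNReal.ofReal p)] : 0 < p :=
  zero_lt_one.trans_le (ENNReal.one_le_ofReal.mp Fact.out)

theorem MeasureTheory.Lp.norm_eq_toReal_lintegral_rpow (φ : Lp ℝ (ENNReal.ofReal p) μ) :
    ‖φ‖ = ((∫⁻ x, ‖φ x‖ₑ ^ p ∂μ) ^ (1 / p)).toReal := by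
  have hp := pos_of_fact_one_le_ofReal p
  rw [Lp.norm_def, eLpNorm_eq_lintegral_rpow_enorm_toReal (by simpa using hp)
    ENNReal.ofReal_ne_top, ENNReal.toReal_ofReal hp.le]

theorem MeasureTheory.Lp.lintegral_enorm_rpow_ne_top (φ : Lp ℝ (ENNReal.ofReal p) μ) :
    ∫⁻ x, ‖φ x‖ₑ ^ p ∂μ ≠ ⊤ := by
  have hp := pos_of_fact_one_le_ofReal p
  have h := lintegral_rpow_enorm_lt_top_of_eLpNorm_lt_top (by simpa using hp)
    ENNReal.ofReal_ne_top (Lp.eLpNorm_ne_top φ).lt_top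
  rw [ENNReal.toReal_ofReal hp.le] at h
  exact h.ne

variable {S : Lp ℝ (ENNReal.ofReal p) μ →L[ℝ] Lp ℝ (ENNReal.ofReal p) μ}

theorem rpow_ratio_le_opNorm (hac : ν ≪ μ)
    (hS : ∀ φ, ∫⁻ x, ‖S φ x‖ₑ ^ p ∂μ = ∫⁻ x, ‖φ x‖ₑ ^ p ∂ν)
    {B : Set X} (hB : MeasurableSet B) (hμB : μ B ≠ 0) (hμB_fin : μ B ≠ ⊤) :
    ((ν B / μ B).toReal) ^ (1 / p) ≤ ‖S‖ := by
  have hp := pos_of_fact_one_le_ofReal p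
  set φ : Lp ℝ (ENNReal.ofReal p) μ := indicatorConstLp (ENNReal.ofReal p) hB hμB_fin (1 : ℝ)
  have hφν : ∫⁻ x, ‖φ x‖ₑ ^ p ∂ν = ν B := by
    rw [← lintegral_indicator_one hB]
    refine lintegral_congr_ae ?_
    have hφ_ae : (φ : X → ℝ) =ᵐ[μ] B.indicator fun _ => 1 := indicatorConstLp_coeFn
    filter_upwards [hac.ae_eq hφ_ae] with x hx
    by_cases hxB : x ∈ B <;> simp [hx, hxB, hp]
  have hφ : ‖φ‖ = μ.real B ^ (1 / p) := by
    rw [norm_indicatorConstLp (by simpa using hp) ENNReal.ofReal_ne_top, norm_one, one_mul,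
      ENNReal.toReal_ofReal hp.le]
  have h := S.le_opNorm φ
  rw [Lp.norm_eq_toReal_lintegral_rpow, hS, hφν, hφ, ← ENNReal.toReal_rpow] at h
  have hμ_pos : 0 < (μ B).toReal ^ (1 / p) := Real.rpow_pos_of_pos (ENNReal.toReal_pos hμB hμB_fin) _
  rwa [ENNReal.toReal_div, Real.div_rpow ENNReal.toReal_nonneg ENNReal.toReal_nonneg,
    div_le_iff₀ hμ_pos]

theorem opNorm_le_of_measure_le (hac : ν ≪ μ)
    (hS : ∀ φ, ∫⁻ x, ‖S φ x‖ₑ ^ p ∂μ = ∫⁻ x, ‖φ x‖ₑ ^ p ∂ν) {M : ℝ} (hM : 0 ≤ M)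
    (hνμ : ∀ A, MeasurableSet A → μ A < ⊤ → ν A ≤ ENNReal.ofReal (M ^ p) * μ A) :
    ‖S‖ ≤ M := by
  have hp := pos_of_fact_one_le_ofReal p
  refine S.opNorm_le_bound hM fun φ => ?_
  have hint := lintegral_le_mul_of_measure_le hac
    ((Lp.aestronglyMeasurable φ).enorm.pow_const p) (Lp.lintegral_enorm_rpow_ne_top φ) hνμ
  rw [← hS] at hint
  have hpow : (ENNReal.ofReal (M ^ p) * ∫⁻ x, ‖φ x‖ₑ ^ p ∂μ) ^ (1 / p)
      = ENNReal.ofReal M * (∫⁻ x, ‖φ x‖ₑ ^ p ∂μ) ^ (1 / p) := by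
    rw [ENNReal.mul_rpow_of_nonneg _ _ (by positivity), ENNReal.ofReal_rpow_of_nonneg
      (by positivity) (by positivity), ← Real.rpow_mul hM, mul_one_div_cancel hp.ne',
      Real.rpow_one]
  have hfin : ENNReal.ofReal M * (∫⁻ x, ‖φ x‖ₑ ^ p ∂μ) ^ (1 / p) ≠ ⊤ :=
    ENNReal.mul_ne_top ENNReal.ofReal_ne_top
      (ENNReal.rpow_ne_top_of_nonneg (by positivity) (Lp.lintegral_enorm_rpow_ne_top φ))
  rw [Lp.norm_eq_toReal_lintegral_rpow, Lp.norm_eq_toReal_lintegral_rpow,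
    ← ENNReal.toReal_ofReal hM, ← ENNReal.toReal_mul]
  exact ENNReal.toReal_mono hfin (hpow ▸ ENNReal.rpow_le_rpow hint (by positivity))

theorem opNorm_eq_iSup_rpow_ratio {K : ℝ≥0∞} (hK : K ≠ ⊤) (hνμ : ν ≤ K • μ)
    (hS : ∀ φ, ∫⁻ x, ‖S φ x‖ₑ ^ p ∂μ = ∫⁻ x, ‖φ x‖ₑ ^ p ∂ν) :
    ‖S‖ = ⨆ B : {B : Set X // MeasurableSet B ∧ 0 < μ B ∧ μ B ≠ ⊤},
      ((ν B.1 / μ B.1).toReal) ^ (1 / p) := by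
  have hp := pos_of_fact_one_le_ofReal p
  have hac : ν ≪ μ := Measure.absolutelyContinuous_of_le_smul hνμ
  have hbdd : BddAbove (Set.range fun B : {B : Set X // MeasurableSet B ∧ 0 < μ B ∧ μ B ≠ ⊤} =>
      ((ν B.1 / μ B.1).toReal) ^ (1 / p)) := by
    refine ⟨K.toReal ^ (1 / p), ?_⟩
    rintro _ ⟨B, rfl⟩
    exact Real.rpow_le_rpow ENNReal.toReal_nonneg
      (ENNReal.toReal_mono hK (ENNReal.div_le_of_le_mul (hνμ B.1))) (by positivity)
  set M := ⨆ B : {B : Set X // MeasurableSet B ∧ 0 < μ B ∧ μ B ≠ ⊤},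
    ((ν B.1 / μ B.1).toReal) ^ (1 / p)
  have hM : 0 ≤ M := Real.iSup_nonneg fun _ => by positivity
  refine le_antisymm (opNorm_le_of_measure_le hac hS hM fun A hA hA_fin => ?_)
    (Real.iSup_le (fun B => rpow_ratio_le_opNorm hac hS B.2.1 B.2.2.1.ne' B.2.2.2) (norm_nonneg _))
  rcases eq_or_ne (μ A) 0 with hA0 | hA0
  · simp [hac hA0]
  have hle : ((ν A / μ A).toReal) ^ (1 / p) ≤ M :=
    le_ciSup hbdd ⟨A, hA, pos_iff_ne_zero.2 hA0, hA_fin.ne⟩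
  rw [one_div, Real.rpow_inv_le_iff_of_pos ENNReal.toReal_nonneg hM hp] at hle
  have hν_fin : ν A ≠ ⊤ := ne_top_of_le_ne_top (ENNReal.mul_ne_top hK hA_fin.ne) (hνμ A)
  rw [← ENNReal.div_le_iff hA0 hA_fin.ne, ENNReal.le_ofReal_iff_toReal_le
    (ENNReal.div_ne_top hν_fin hA0) (by positivity)]
  exact hle

end LpNorm

section WeightedComposition

variable {X : Type*} {f : X → X} {w : X → ℝ}

def weightIterate (f : X → X) (w : X → ℝ) (n : ℕ) (x : X) : ℝ :=
  ∏ j ∈ Finset.range n, w (f^[j] x)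

theorem weightIterate_succ (n : ℕ) (x : X) :
    weightIterate f w (n + 1) x = weightIterate f w n (f x) * w x := by
  simp only [weightIterate, Finset.prod_range_succ', Function.iterate_succ_apply,
    Function.iterate_zero_apply]

theorem weightIterate_succ' (n : ℕ) (x : X) :
    weightIterate f w (n + 1) x = weightIterate f w n x * w (f^[n] x) :=
  Finset.prod_range_succ _ n

variable [MeasurableSpace X] {μ : Measure X} {p : ℝ}

theorem measurable_weightIterate (hf : Measurable f) (hw : Measurable w) (n : ℕ) :
    Measurable (weightIterate f w n) :=
  Finset.measurable_prod _ fun j _ => hw.comp (hf.iterate j)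

/-- The measure `B ↦ μ_n(f^{-n}(B))` of the paper. -/
noncomputable def weightedIterateMap (μ : Measure X) (f : X → X) (w : X → ℝ) (p : ℝ) (n : ℕ) :
    Measure X :=
  (μ.withDensity fun x => ‖weightIterate f w n x‖ₑ ^ p).map f^[n]

theorem weightedIterateMap_apply (hf : Measurable f) (n : ℕ) {B : Set X} (hB : MeasurableSet B) :
    weightedIterateMap μ f w p n B = ∫⁻ x in f^[n] ⁻¹' B, ‖weightIterate f w n x‖ₑ ^ p ∂μ := by
  rw [weightedIterateMap, Measure.map_apply (hf.iterate n) hB,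
    withDensity_apply _ ((hf.iterate n) hB)]

theorem setLIntegral_comp_mul_le {ρ g : X → ℝ≥0∞} {c : ℝ≥0∞} (hf : Measurable f)
    (hρ : Measurable ρ) (hg : Measurable g)
    (hbound : ∀ B, MeasurableSet B → ∫⁻ x in B, ρ x ∂μ ≤ c * μ (f '' B))
    {B : Set X} (hB : MeasurableSet B) :
    ∫⁻ x in B, g (f x) * ρ x ∂μ ≤ c * ∫⁻ y in f '' B, g y ∂μ := by
  have hle : ((μ.restrict B).withDensity ρ).map f ≤ c • μ.restrict (f '' B) := by
    refine Measure.le_iff.2 fun s hs => ?_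
    rw [Measure.map_apply hf hs, withDensity_apply _ (hf hs), Measure.restrict_restrict (hf hs),
      Measure.smul_apply, Measure.restrict_apply hs, smul_eq_mul]
    refine (hbound _ ((hf hs).inter hB)).trans ?_
    gcongr
    rintro _ ⟨x, ⟨hxs, hxB⟩, rfl⟩
    exact ⟨hxs, x, hxB, rfl⟩
  calc ∫⁻ x in B, g (f x) * ρ x ∂μ = ∫⁻ y, g y ∂(((μ.restrict B).withDensity ρ).map f) := by
        rw [lintegral_map hg hf]
        exact ((lintegral_withDensity_eq_lintegral_mul _ hρ (hg.comp hf)).trans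
          (lintegral_congr fun x => mul_comm _ _)).symm
    _ ≤ ∫⁻ y, g y ∂(c • μ.restrict (f '' B)) := lintegral_mono' hle le_rfl
    _ = c * ∫⁻ y in f '' B, g y ∂μ := lintegral_smul_measure c _

section Bound

variable {c : ℝ≥0∞} (hf : Measurable f) (hf' : ∀ B, MeasurableSet B → MeasurableSet (f '' B))
  (hw : Measurable w) (hp : 0 ≤ p)
  (hbound : ∀ B, MeasurableSet B → ∫⁻ x in B, ‖w x‖ₑ ^ p ∂μ ≤ c * μ (f '' B))
include hf hf' hw hp hbound

theorem setLIntegral_weightIterate_le (n : ℕ) {B : Set X} (hB : MeasurableSet B) :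
    ∫⁻ x in B, ‖weightIterate f w n x‖ₑ ^ p ∂μ ≤ c ^ n * μ (f^[n] '' B) := by
  induction n generalizing B with
  | zero => simp [weightIterate]
  | succ n ih =>
    simp only [weightIterate_succ, enorm_mul, ENNReal.mul_rpow_of_nonneg _ _ hp]
    calc ∫⁻ x in B, ‖weightIterate f w n (f x)‖ₑ ^ p * ‖w x‖ₑ ^ p ∂μ
        ≤ c * ∫⁻ y in f '' B, ‖weightIterate f w n y‖ₑ ^ p ∂μ :=
          setLIntegral_comp_mul_le hf (hw.enorm.pow_const p)
            ((measurable_weightIterate hf hw n).enorm.pow_const p) hbound hB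
      _ ≤ c * (c ^ n * μ (f^[n] '' (f '' B))) := by gcongr; exact ih (hf' B hB)
      _ = c ^ (n + 1) * μ (f^[n + 1] '' B) := by
        rw [Set.image_image, ← mul_assoc, ← pow_succ']
        rfl

theorem weightedIterateMap_le_smul (n : ℕ) : weightedIterateMap μ f w p n ≤ c ^ n • μ := by
  refine Measure.le_iff.2 fun B hB => ?_
  rw [weightedIterateMap_apply hf n hB, Measure.smul_apply, smul_eq_mul]
  refine (setLIntegral_weightIterate_le hf hf' hw hp hbound n ((hf.iterate n) hB)).trans ?_
  gcongr
  exact Set.image_preimage_subset _ _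

end Bound

end WeightedComposition

section Operator

variable {X : Type*} [MeasurableSpace X] {μ : Measure X} {f : X → X} {w : X → ℝ} {p : ℝ}
  (hf : Measurable f) (hw : Measurable w) (hp : 0 < p)
include hf hw hp

theorem comp_iterate_mul_weightIterate_ae_eq {n : ℕ} (hac : weightedIterateMap μ f w p n ≪ μ)
    {g h : X → ℝ} (hgh : g =ᵐ[μ] h) :
    (fun x => g (f^[n] x) * weightIterate f w n x)
      =ᵐ[μ] fun x => h (f^[n] x) * weightIterate f w n x := by
  have hgh' : ∀ᵐ x ∂(μ.withDensity fun x => ‖weightIterate f w n x‖ₑ ^ p),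
      g (f^[n] x) = h (f^[n] x) :=
    ae_of_ae_map (hf.iterate n).aemeasurable (hac.ae_eq hgh)
  rw [ae_withDensity_iff ((measurable_weightIterate hf hw n).enorm.pow_const p)] at hgh'
  filter_upwards [hgh'] with x hx
  by_cases hx0 : ‖weightIterate f w n x‖ₑ ^ p = 0
  · simp only [ENNReal.rpow_eq_zero_iff, enorm_eq_zero, hp, not_lt_of_gt hp, and_true,
      and_false, or_false] at hx0
    simp [hx0]
  · rw [hx hx0]

variable [Fact (1 ≤ ENNReal.ofReal p)]
  {T : Lp ℝ (ENNReal.ofReal p) μ →L[ℝ] Lp ℝ (ENNReal.ofReal p) μ}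
  (hT : ∀ φ : Lp ℝ (ENNReal.ofReal p) μ, (T φ : X → ℝ) =ᵐ[μ] fun x => φ (f x) * w x)
  (hac : ∀ n, weightedIterateMap μ f w p n ≪ μ)
include hT hac

theorem coeFn_pow_apply_ae_eq (n : ℕ) (φ : Lp ℝ (ENNReal.ofReal p) μ) :
    ((T ^ n) φ : X → ℝ) =ᵐ[μ] fun x => φ (f^[n] x) * weightIterate f w n x := by
  induction n generalizing φ with
  | zero => simp [weightIterate]
  | succ n ih =>
    rw [pow_succ, mul_apply_eq_comp]
    filter_upwards [ih (T φ), comp_iterate_mul_weightIterate_ae_eq hf hw hp (hac n) (hT φ)]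
      with x hTn hTφ
    rw [hTn, hTφ, Function.iterate_succ_apply', weightIterate_succ']
    ring

theorem lintegral_enorm_pow_apply_rpow (n : ℕ) (φ : Lp ℝ (ENNReal.ofReal p) μ) :
    ∫⁻ x, ‖(T ^ n) φ x‖ₑ ^ p ∂μ = ∫⁻ y, ‖φ y‖ₑ ^ p ∂weightedIterateMap μ f w p n := by
  calc ∫⁻ x, ‖(T ^ n) φ x‖ₑ ^ p ∂μ
      = ∫⁻ x, ‖weightIterate f w n x‖ₑ ^ p * ‖φ (f^[n] x)‖ₑ ^ p ∂μ := by
        refine lintegral_congr_ae ?_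
        filter_upwards [coeFn_pow_apply_ae_eq hf hw hp hT hac n φ] with x hx
        rw [hx, enorm_mul, ENNReal.mul_rpow_of_nonneg _ _ hp.le, mul_comm]
    _ = ∫⁻ x, ‖φ (f^[n] x)‖ₑ ^ p ∂(μ.withDensity fun x => ‖weightIterate f w n x‖ₑ ^ p) :=
        (lintegral_withDensity_eq_lintegral_mul_non_measurable _
          ((measurable_weightIterate hf hw n).enorm.pow_const p)
          (ae_of_all _ fun _ => ENNReal.rpow_lt_top_of_nonneg hp.le enorm_ne_top) _).symm
    _ = ∫⁻ y, ‖φ y‖ₑ ^ p ∂weightedIterateMap μ f w p n :=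
        (lintegral_map' (((Lp.aestronglyMeasurable φ).enorm.pow_const p).mono_ac (hac n))
          (hf.iterate n).aemeasurable).symm

end Operator

theorem stmt3_general {X : Type*} [MeasurableSpace X] (μ : Measure X)
    (p : ℝ) [Fact (1 ≤ ENNReal.ofReal p)]
    (f : X → X) (hf : Measurable f)
    (hf' : ∀ B : Set X, MeasurableSet B → MeasurableSet (f '' B))
    (w : X → ℝ) (hw : Measurable w)
    (c : ℝ)
    (hbound : ∀ B : Set X, MeasurableSet B →
      ∫⁻ x in B, ENNReal.ofReal (|w x| ^ p) ∂μ ≤ ENNReal.ofReal c * μ (f '' B))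
    (T : Lp ℝ (ENNReal.ofReal p) μ →L[ℝ] Lp ℝ (ENNReal.ofReal p) μ)
    (hT : ∀ φ : Lp ℝ (ENNReal.ofReal p) μ, (T φ : X → ℝ) =ᵐ[μ] fun x => φ (f x) * w x)
    (n : ℕ) :
    ‖T ^ n‖ = ⨆ B : {B : Set X // MeasurableSet B ∧ 0 < μ B ∧ μ B ≠ ⊤},
      ((∫⁻ x in (f^[n]) ⁻¹' B.1,
          ENNReal.ofReal (|∏ j ∈ Finset.range n, w (f^[j] x)| ^ p) ∂μ) / μ B.1).toReal
        ^ (1 / p) := by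
  have hp := pos_of_fact_one_le_ofReal p
  have hpow (a : ℝ) : ENNReal.ofReal (|a| ^ p) = ‖a‖ₑ ^ p := by
    rw [Real.enorm_eq_ofReal_abs, ENNReal.ofReal_rpow_of_nonneg (abs_nonneg a) hp.le]
  simp only [hpow] at hbound ⊢
  have hle (k : ℕ) := weightedIterateMap_le_smul hf hf' hw hp.le hbound k
  have hac (k : ℕ) := Measure.absolutelyContinuous_of_le_smul (hle k)
  rw [opNorm_eq_iSup_rpow_ratio (ENNReal.pow_ne_top ENNReal.ofReal_ne_top) (hle n)
    (lintegral_enorm_pow_apply_rpow hf hw hp hT hac n)]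
  refine iSup_congr fun B => ?_
  rw [weightedIterateMap_apply hf n B.2.1]
  rfl

/-- For a weighted composition operator `C_{w,f}` on `L^p(μ)`,
`‖(C_{w,f})^n‖ = sup_{0 < μ B < ∞} (μ_n(f^{-n}(B)) / μ B)^{1/p}`, where
`μ_n(B) = ∫_B |w^{(n)}|^p dμ` and `w^{(n)} = (w∘f^{n-1})⋯(w∘f)·w`. -/
theorem stmt3 {X : Type*} [MeasurableSpace X] (μ : Measure X)
    (p : ℝ) (hp : 1 ≤ p) [Fact (1 ≤ ENNReal.ofReal p)]
    (f : X → X) (hf : Measurable f)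
    (hf' : ∀ B : Set X, MeasurableSet B → MeasurableSet (f '' B))
    (w : X → ℝ) (hw : Measurable w)
    (hmul : ∀ φ : Lp ℝ (ENNReal.ofReal p) μ, MemLp (fun x => φ x * w x) (ENNReal.ofReal p) μ)
    (c : ℝ) (hc : 0 < c)
    (hbound : ∀ B : Set X, MeasurableSet B →
      ∫⁻ x in B, ENNReal.ofReal (|w x| ^ p) ∂μ ≤ ENNReal.ofReal c * μ (f '' B))
    (T : Lp ℝ (ENNReal.ofReal p) μ →L[ℝ] Lp ℝ (ENNReal.ofReal p) μ)
    (hT : ∀ φ : Lp ℝ (ENNReal.ofReal p) μ, (T φ : X → ℝ) =ᵐ[μ] fun x => φ (f x) * w x)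
    (n : ℕ) (hn : 1 ≤ n) :
    ‖T ^ n‖ = ⨆ B : {B : Set X // MeasurableSet B ∧ 0 < μ B ∧ μ B ≠ ⊤},
      ((∫⁻ x in (f^[n]) ⁻¹' B.1,
          ENNReal.ofReal (|∏ j ∈ Finset.range n, w (f^[j] x)| ^ p) ∂μ) / μ B.1).toReal
        ^ (1 / p) :=
  stmt3_general μ p f hf hf' w hw c hbound T hT n
end

section
/- Let C_{w,f} be a weighted composition operator on C_0(Ω), where Ω is a locally compact Hausdorff space, w : Ω → 𝕂 is continuous and bounded, f : Ω → Ω is continuous, and for all ε > 0 and compact K ⊂ Ω the set {x : f(x) ∈ K and |w(x)| ≥ ε} is compact. Then for every n ∈ ℕ, ‖(C_{w,f})^n‖ = ‖w^{(n)}‖_∞, where w^{(n)} = (w∘f^{n-1})⋯(w∘f)·w and ‖·‖_∞ denotes the supremum norm over Ω. -/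
open scoped ZeroAtInfty

/-!
`T ^ n` is again a weighted composition operator, with symbol `f^[n]` and weight
`∏_{j<n} w ∘ f^[j]`, so it suffices to compute the norm of a single weighted composition
operator `S φ = (φ ∘ g) * W`. The bound `‖S‖ ≤ sup ‖W‖` is pointwise; conversely, testing `S`
on a Urysohn function of norm `1` that equals `1` at `g x` gives `‖W x‖ ≤ ‖S‖`.
-/

namespace ZeroAtInftyContinuousMap

variable {α β : Type*} [TopologicalSpace α] [SeminormedAddCommGroup β]

theorem norm_coe_le_norm (f : C₀(α, β)) (x : α) : ‖f x‖ ≤ ‖f‖ :=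
  f.toBCF.norm_coe_le_norm x

theorem norm_le {f : C₀(α, β)} {C : ℝ} (hC : 0 ≤ C) : ‖f‖ ≤ C ↔ ∀ x, ‖f x‖ ≤ C :=
  BoundedContinuousFunction.norm_le hC

theorem exists_norm_le_one_apply_eq_one {𝕜 : Type*} [RCLike 𝕜] [LocallyCompactSpace α]
    [T2Space α] (x : α) : ∃ φ : C₀(α, 𝕜), ‖φ‖ ≤ 1 ∧ φ x = 1 := by
  obtain ⟨g, hg1, -, hgc, hg01⟩ := exists_continuous_one_zero_of_isCompact
    (isCompact_singleton (x := x)) isClosed_empty (Set.disjoint_empty _)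
  let φ : C₀(α, 𝕜) :=
    ⟨⟨fun y => (g y : 𝕜), RCLike.continuous_ofReal.comp g.continuous⟩,
      (hgc.comp_left RCLike.ofReal_zero).is_zero_at_infty⟩
  refine ⟨φ, (norm_le zero_le_one).2 fun y => ?_, by simp [φ, hg1 rfl]⟩
  simpa [φ, RCLike.norm_ofReal, abs_of_nonneg (hg01 y).1] using (hg01 y).2

end ZeroAtInftyContinuousMap

section WeightedComposition

variable {Ω 𝕜 : Type*} [TopologicalSpace Ω] [RCLike 𝕜]

theorem pow_apply_eq_comp_iterate_mul_prod {T : C₀(Ω, 𝕜) →L[𝕜] C₀(Ω, 𝕜)} {f : Ω → Ω}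
    {w : Ω → 𝕜} (hT : ∀ φ x, T φ x = φ (f x) * w x) (n : ℕ) (φ : C₀(Ω, 𝕜)) (x : Ω) :
    (T ^ n) φ x = φ (f^[n] x) * ∏ j ∈ Finset.range n, w (f^[j] x) := by
  induction n generalizing φ with
  | zero => simp
  | succ n ih =>
    rw [pow_succ, mul_apply_eq_comp, ih, hT, Finset.prod_range_succ,
      ← Function.iterate_succ_apply' f n x]
    ring

variable [LocallyCompactSpace Ω] [T2Space Ω]

theorem norm_weight_le_opNorm {S : C₀(Ω, 𝕜) →L[𝕜] C₀(Ω, 𝕜)} {g : Ω → Ω} {W : Ω → 𝕜}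
    (hS : ∀ φ x, S φ x = φ (g x) * W x) (x : Ω) : ‖W x‖ ≤ ‖S‖ := by
  obtain ⟨φ, hφ, hφx⟩ := ZeroAtInftyContinuousMap.exists_norm_le_one_apply_eq_one (𝕜 := 𝕜) (g x)
  calc ‖W x‖ = ‖S φ x‖ := by rw [hS, hφx, one_mul]
    _ ≤ ‖S φ‖ := (S φ).norm_coe_le_norm x
    _ ≤ ‖S‖ * ‖φ‖ := S.le_opNorm φ
    _ ≤ ‖S‖ := mul_le_of_le_one_right (norm_nonneg S) hφ

theorem opNorm_eq_iSup_norm_weight {S : C₀(Ω, 𝕜) →L[𝕜] C₀(Ω, 𝕜)} {g : Ω → Ω} {W : Ω → 𝕜}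
    (hS : ∀ φ x, S φ x = φ (g x) * W x) : ‖S‖ = ⨆ x, ‖W x‖ := by
  have hbdd : BddAbove (Set.range fun x => ‖W x‖) :=
    ⟨‖S‖, Set.forall_mem_range.2 (norm_weight_le_opNorm hS)⟩
  have hsup : 0 ≤ ⨆ x, ‖W x‖ := Real.iSup_nonneg fun x => norm_nonneg (W x)
  refine le_antisymm (S.opNorm_le_bound hsup fun φ => ?_)
    (Real.iSup_le (norm_weight_le_opNorm hS) (norm_nonneg S))
  refine (ZeroAtInftyContinuousMap.norm_le (by positivity)).2 fun x => ?_
  rw [hS, norm_mul, mul_comm]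
  exact mul_le_mul (le_ciSup hbdd x) (φ.norm_coe_le_norm _) (norm_nonneg _) hsup

end WeightedComposition

theorem stmt5_general {Ω : Type*} [TopologicalSpace Ω] [LocallyCompactSpace Ω] [T2Space Ω]
    (w : Ω → ℝ)
    (f : Ω → Ω)
    (T : C₀(Ω, ℝ) →L[ℝ] C₀(Ω, ℝ))
    (hT : ∀ (φ : C₀(Ω, ℝ)) (x : Ω), T φ x = φ (f x) * w x)
    (n : ℕ) :
    ‖T ^ n‖ = ⨆ x : Ω, |∏ j ∈ Finset.range n, w (f^[j] x)| :=
  opNorm_eq_iSup_norm_weight (pow_apply_eq_comp_iterate_mul_prod hT n)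

/-- For a weighted composition operator `C_{w,f}` on `C₀(Ω)`, with `w` continuous and bounded,
`f` continuous, and `{x : f x ∈ K ∧ |w x| ≥ ε}` compact for all `ε > 0` and compact `K`,
one has `‖(C_{w,f})^n‖ = ‖w^{(n)}‖_∞` for every `n ≥ 1`, where
`w^{(n)} = (w∘f^{n-1})⋯(w∘f)·w`. -/
theorem stmt5 {Ω : Type*} [TopologicalSpace Ω] [LocallyCompactSpace Ω] [T2Space Ω]
    (w : Ω → ℝ) (hw : Continuous w) (hwb : ∃ C : ℝ, ∀ x, |w x| ≤ C)
    (f : Ω → Ω) (hf : Continuous f)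
    (hcpt : ∀ ε : ℝ, 0 < ε → ∀ K : Set Ω, IsCompact K →
      IsCompact {x : Ω | f x ∈ K ∧ ε ≤ |w x|})
    (T : C₀(Ω, ℝ) →L[ℝ] C₀(Ω, ℝ))
    (hT : ∀ (φ : C₀(Ω, ℝ)) (x : Ω), T φ x = φ (f x) * w x)
    (n : ℕ) (hn : 1 ≤ n) :
    ‖T ^ n‖ = ⨆ x : Ω, |∏ j ∈ Finset.range n, w (f^[j] x)| :=
  stmt5_general w f T hT n
end

section
/- For a unilateral weighted backward shift B_w on ℓ^p(ℕ) (1 ≤ p < ∞), N_p(B_w) = sup_{i ∈ ℕ, N ∈ ℕ} (1/N) Σ_{n=1}^{min{N, i-1}} |w_{i-n} ⋯ w_{i-1}|^p; in particular, B_w is p-absolutely Cesàro bounded if and only if this supremum is finite. -/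
/-!
Since `(B_w^n x)_k = (w_k ⋯ w_{k+n-1}) x_{k+n}`, reindexing by `i = k + n` gives
`(1/N) Σ_{n=1}^N ‖B_w^n x‖^p = Σ_i c_{N,i} |x_i|^p`, where `c_{N,i}` is the average of the
`|w_{i-n} ⋯ w_{i-1}|^p` over `1 ≤ n ≤ min N i`. The Cesàro mean is thus a weighted sum of the
`|x_i|^p` with total mass `‖x‖^p`, so its supremum over unit vectors is `sup_{N,i} c_{N,i}`,
attained on the unit vectors `e_i`.
-/

open scoped ENNReal

local notation "ℓ[" p "]" => lp (fun _ : ℕ => ℝ) (ENNReal.ofReal p)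

theorem Finset.prod_range_add_eq_prod_Icc_sub {M : Type*} [CommMonoid M] (f : ℕ → M) (k n : ℕ) :
    ∏ j ∈ Finset.range n, f (k + j) = ∏ j ∈ Finset.Icc 1 n, f (k + n - j) := by
  refine Finset.prod_nbij' (n - ·) (n - ·) ?_ ?_ ?_ ?_ ?_ <;>
    intro j hj <;> simp only [Finset.mem_range, Finset.mem_Icc] at hj ⊢
  all_goals first | omega | congr 1; omega

theorem Finset.filter_Icc_le_eq_Icc_min (N i : ℕ) :
    (Finset.Icc 1 N).filter (· ≤ i) = Finset.Icc 1 (min N i) := by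
  ext n
  simp only [Finset.mem_filter, Finset.mem_Icc]
  omega

lemma lp.hasSum_abs_rpow {p : ℝ} [Fact (1 ≤ ENNReal.ofReal p)] (x : ℓ[p]) :
    HasSum (fun i => |x i| ^ p) (‖x‖ ^ p) := by
  have hp : 1 ≤ p := ENNReal.one_le_ofReal.mp Fact.out
  have hp' : (ENNReal.ofReal p).toReal = p := ENNReal.toReal_ofReal (by linarith)
  simpa [hp'] using lp.hasSum_norm (by rw [hp']; linarith) x

lemma lp.norm_single_one {p : ℝ} [Fact (1 ≤ ENNReal.ofReal p)] (i : ℕ) :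
    ‖(lp.single _ i 1 : ℓ[p])‖ = 1 := by
  have hp : 0 < ENNReal.ofReal p := zero_lt_one.trans_le Fact.out
  simpa using lp.norm_single (E := fun _ : ℕ => ℝ) hp i 1

noncomputable def cesaroWeight (p : ℝ) (w : ℕ → ℝ) (N i : ℕ) : ℝ :=
  (1 / N : ℝ) * ∑ n ∈ Finset.Icc 1 (min N i), |∏ j ∈ Finset.Icc 1 n, w (i - j)| ^ p

noncomputable def cesaroWeightSup (p : ℝ) (w : ℕ → ℝ) : ℝ≥0∞ :=
  ⨆ i : ℕ, ⨆ N : ℕ, ⨆ _ : 1 ≤ N, ENNReal.ofReal (cesaroWeight p w N i)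

lemma cesaroWeight_le_toReal_cesaroWeightSup {p : ℝ} {w : ℕ → ℝ} (h : cesaroWeightSup p w ≠ ⊤)
    {N : ℕ} (hN : 1 ≤ N) (i : ℕ) : cesaroWeight p w N i ≤ (cesaroWeightSup p w).toReal :=
  (ENNReal.ofReal_le_iff_le_toReal h).1 (le_iSup_of_le i (le_iSup₂_of_le N hN le_rfl))

noncomputable def cesaroMean {E : Type*} [SeminormedAddCommGroup E] [Module ℝ E]
    (T : E →L[ℝ] E) (p : ℝ) (N : ℕ) (x : E) : ℝ :=
  (1 / N : ℝ) * ∑ n ∈ Finset.Icc 1 N, ‖(T ^ n) x‖ ^ p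

section WeightedShift

variable {p : ℝ} [Fact (1 ≤ ENNReal.ofReal p)] {w : ℕ → ℝ} {B : ℓ[p] →L[ℝ] ℓ[p]}
  (hB : ∀ (x : ℓ[p]) (n : ℕ), (B x : ∀ _ : ℕ, ℝ) n = w n * x (n + 1))
include hB

lemma weightedShift_pow_apply (n : ℕ) (x : ℓ[p]) (i : ℕ) :
    ((B ^ n) x : ∀ _ : ℕ, ℝ) i = (∏ j ∈ Finset.range n, w (i + j)) * x (i + n) := by
  induction n generalizing x with
  | zero => simp
  | succ n ih =>
    rw [pow_succ, mul_apply_eq_comp, ih, hB, Finset.prod_range_succ, ← add_assoc]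
    ring

lemma hasSum_norm_weightedShift_pow_rpow (n : ℕ) (x : ℓ[p]) :
    HasSum (fun i => if n ≤ i then |∏ j ∈ Finset.Icc 1 n, w (i - j)| ^ p * |x i| ^ p else 0)
      (‖(B ^ n) x‖ ^ p) := by
  refine (Function.Injective.hasSum_iff (add_left_injective n) fun i hi => if_neg ?_).mp ?_
  · rintro hni
    exact hi ⟨i - n, Nat.sub_add_cancel hni⟩
  · convert lp.hasSum_abs_rpow ((B ^ n) x) using 2 with k
    rw [weightedShift_pow_apply hB, abs_mul, Real.mul_rpow (abs_nonneg _) (abs_nonneg _),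
      Finset.prod_range_add_eq_prod_Icc_sub]
    simp

lemma hasSum_cesaroWeight_mul (N : ℕ) (x : ℓ[p]) :
    HasSum (fun i => cesaroWeight p w N i * |x i| ^ p)
      (cesaroMean B p N x) := by
  refine ((hasSum_sum fun n _ => hasSum_norm_weightedShift_pow_rpow hB n x).mul_left
    (1 / N : ℝ)).congr_fun fun i => ?_
  rw [cesaroWeight, mul_assoc, Finset.sum_mul, ← Finset.filter_Icc_le_eq_Icc_min,
    Finset.sum_filter]

lemma cesaroMean_single (N i : ℕ) :
    cesaroMean B p N (lp.single _ i 1) = cesaroWeight p w N i := by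
  have hp : 0 < p := by linarith [ENNReal.one_le_ofReal.mp (Fact.out : 1 ≤ ENNReal.ofReal p)]
  refine (hasSum_cesaroWeight_mul hB N _).unique (hasSum_single i fun k hk => ?_) |>.trans ?_
  · simp [lp.single_apply, hk, Real.zero_rpow hp.ne']
  · simp

lemma cesaroMean_le {N : ℕ} {M : ℝ} (hM : ∀ i, cesaroWeight p w N i ≤ M) (x : ℓ[p]) :
    cesaroMean B p N x ≤ M * ‖x‖ ^ p :=
  hasSum_le (fun i => mul_le_mul_of_nonneg_right (hM i) (by positivity))
    (hasSum_cesaroWeight_mul hB N x) ((lp.hasSum_abs_rpow x).mul_left M)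

lemma cesaroMean_le_of_cesaroWeightSup_ne_top (h : cesaroWeightSup p w ≠ ⊤) {N : ℕ} (hN : 1 ≤ N)
    (x : ℓ[p]) :
    cesaroMean B p N x ≤ (cesaroWeightSup p w).toReal * ‖x‖ ^ p :=
  cesaroMean_le hB (cesaroWeight_le_toReal_cesaroWeightSup h hN) x

lemma iSup_cesaroMean_eq_cesaroWeightSup :
    (⨆ x : {x : ℓ[p] // ‖x‖ = 1}, ⨆ N : ℕ, ⨆ _ : 1 ≤ N,
        ENNReal.ofReal (cesaroMean B p N x.1)) =
      cesaroWeightSup p w := by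
  refine le_antisymm (iSup_le fun x => iSup₂_le fun N hN => ?_)
    (iSup_le fun i => iSup₂_le fun N hN => ?_)
  · rcases eq_or_ne (cesaroWeightSup p w) ⊤ with h | h
    · exact h ▸ le_top
    · refine (ENNReal.ofReal_le_iff_le_toReal h).2 ?_
      simpa [x.2] using cesaroMean_le_of_cesaroWeightSup_ne_top hB h hN x.1
  · rw [← cesaroMean_single hB N i]
    exact le_iSup_of_le ⟨_, lp.norm_single_one i⟩ (le_iSup₂_of_le N hN le_rfl)

lemma exists_cesaroMean_le_iff_cesaroWeightSup_ne_top :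
    (∃ C : ℝ, 0 < C ∧ ∀ x : ℓ[p], ∀ N : ℕ, 1 ≤ N →
        cesaroMean B p N x ≤ C * ‖x‖ ^ p) ↔
      cesaroWeightSup p w ≠ ⊤ := by
  constructor
  · rintro ⟨C, -, hC⟩
    refine ne_top_of_le_ne_top (ENNReal.ofReal_ne_top : ENNReal.ofReal C ≠ ⊤)
      (iSup_le fun i => iSup₂_le fun N hN => ENNReal.ofReal_le_ofReal ?_)
    simpa only [cesaroMean_single hB, lp.norm_single_one, Real.one_rpow, mul_one] using
      hC (lp.single _ i 1) N hN
  · intro h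
    refine ⟨(cesaroWeightSup p w).toReal + 1, by positivity, fun x N hN =>
      (cesaroMean_le_of_cesaroWeightSup_ne_top hB h hN x).trans ?_⟩
    gcongr
    linarith

end WeightedShift

theorem stmt9_general (p : ℝ) [Fact (1 ≤ ENNReal.ofReal p)] (w : ℕ → ℝ)
    (B : lp (fun _ : ℕ => ℝ) (ENNReal.ofReal p) →L[ℝ] lp (fun _ : ℕ => ℝ) (ENNReal.ofReal p))
    (hB : ∀ (x : lp (fun _ : ℕ => ℝ) (ENNReal.ofReal p)) (n : ℕ),
      (B x : ∀ _ : ℕ, ℝ) n = w n * x (n + 1)) :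
    (⨆ x : {x : lp (fun _ : ℕ => ℝ) (ENNReal.ofReal p) // ‖x‖ = 1}, ⨆ N : ℕ, ⨆ _ : 1 ≤ N,
        ENNReal.ofReal ((1 / N : ℝ) * ∑ n ∈ Finset.Icc 1 N, ‖(B ^ n) x.1‖ ^ p))
      = (⨆ i : ℕ, ⨆ N : ℕ, ⨆ _ : 1 ≤ N,
          ENNReal.ofReal ((1 / N : ℝ) * ∑ n ∈ Finset.Icc 1 (min N i),
            |∏ j ∈ Finset.Icc 1 n, w (i - j)| ^ p)) ∧
    ((∃ C : ℝ, 0 < C ∧ ∀ x : lp (fun _ : ℕ => ℝ) (ENNReal.ofReal p), ∀ N : ℕ, 1 ≤ N →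
        (1 / N : ℝ) * ∑ n ∈ Finset.Icc 1 N, ‖(B ^ n) x‖ ^ p ≤ C * ‖x‖ ^ p) ↔
      (⨆ i : ℕ, ⨆ N : ℕ, ⨆ _ : 1 ≤ N,
          ENNReal.ofReal ((1 / N : ℝ) * ∑ n ∈ Finset.Icc 1 (min N i),
            |∏ j ∈ Finset.Icc 1 n, w (i - j)| ^ p)) ≠ ⊤) :=
  ⟨iSup_cesaroMean_eq_cesaroWeightSup hB, exists_cesaroMean_le_iff_cesaroWeightSup_ne_top hB⟩

/-- For a unilateral weighted backward shift `B_w` on `ℓ^p(ℕ)` (here `0`-indexed, so that the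
entry of index `i` corresponds to the paper's entry `i+1`),
`N_p(B_w) = sup_{i, N} (1/N) Σ_{n=1}^{min{N,i}} |w_{i-n} ⋯ w_{i-1}|^p`; in particular `B_w` is
`p`-absolutely Cesàro bounded iff this supremum is finite. -/
theorem stmt9 (p : ℝ) (hp : 1 ≤ p) [Fact (1 ≤ ENNReal.ofReal p)] (w : ℕ → ℝ)
    (hw : ∃ C : ℝ, ∀ i, |w i| ≤ C)
    (B : lp (fun _ : ℕ => ℝ) (ENNReal.ofReal p) →L[ℝ] lp (fun _ : ℕ => ℝ) (ENNReal.ofReal p))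
    (hB : ∀ (x : lp (fun _ : ℕ => ℝ) (ENNReal.ofReal p)) (n : ℕ),
      (B x : ∀ _ : ℕ, ℝ) n = w n * x (n + 1)) :
    (⨆ x : {x : lp (fun _ : ℕ => ℝ) (ENNReal.ofReal p) // ‖x‖ = 1}, ⨆ N : ℕ, ⨆ _ : 1 ≤ N,
        ENNReal.ofReal ((1 / N : ℝ) * ∑ n ∈ Finset.Icc 1 N, ‖(B ^ n) x.1‖ ^ p))
      = (⨆ i : ℕ, ⨆ N : ℕ, ⨆ _ : 1 ≤ N,
          ENNReal.ofReal ((1 / N : ℝ) * ∑ n ∈ Finset.Icc 1 (min N i),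
            |∏ j ∈ Finset.Icc 1 n, w (i - j)| ^ p)) ∧
    ((∃ C : ℝ, 0 < C ∧ ∀ x : lp (fun _ : ℕ => ℝ) (ENNReal.ofReal p), ∀ N : ℕ, 1 ≤ N →
        (1 / N : ℝ) * ∑ n ∈ Finset.Icc 1 N, ‖(B ^ n) x‖ ^ p ≤ C * ‖x‖ ^ p) ↔
      (⨆ i : ℕ, ⨆ N : ℕ, ⨆ _ : 1 ≤ N,
          ENNReal.ofReal ((1 / N : ℝ) * ∑ n ∈ Finset.Icc 1 (min N i),
            |∏ j ∈ Finset.Icc 1 n, w (i - j)| ^ p)) ≠ ⊤) :=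
  stmt9_general p w B hB
end

section
/- For a bilateral weighted backward shift B_w on ℓ^p(ℤ) (1 ≤ p < ∞), N_p(B_w) = sup_{i ∈ ℤ, N ∈ ℕ} (1/N) Σ_{n=1}^{N} |w_{i-n} ⋯ w_{i-1}|^p; in particular, B_w is p-absolutely Cesàro bounded if and only if this supremum is finite. -/
open scoped ENNReal

/-!
Since `(B^n x)_{k-n} = w_{k-n} ⋯ w_{k-1} x_k`, reindexing gives
`(1/N) Σ_{n ≤ N} ‖B^n x‖^p = Σ_k |x_k|^p c_k(N)`, where
`c_k(N) = (1/N) Σ_{n ≤ N} |w_{k-n} ⋯ w_{k-1}|^p`.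
For `‖x‖ = 1` this is an average of the `c_k(N)` with weights `|x_k|^p`, and `x = e_k` picks out
`c_k(N)`; so both suprema agree, and the Cesàro bound holds with `C` iff `sup c_k(N) ≤ C`.
-/

noncomputable def cesaroPowMean (p : ℝ) (a : ℕ → ℝ) (N : ℕ) : ℝ :=
  (1 / N : ℝ) * ∑ n ∈ Finset.Icc 1 N, a n ^ p

def weightProd (w : ℤ → ℝ) (i : ℤ) (n : ℕ) : ℝ :=
  ∏ j ∈ Finset.Icc 1 n, w (i - j)

theorem weightProd_succ (w : ℤ → ℝ) (i : ℤ) (n : ℕ) :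
    weightProd w i (n + 1) = weightProd w i n * w (i - (n + 1 : ℕ)) :=
  Finset.prod_Icc_succ_top (by omega) _

noncomputable def weightMeanSup (w : ℤ → ℝ) (p : ℝ) : ℝ≥0∞ :=
  ⨆ i : ℤ, ⨆ N : ℕ, ⨆ _ : 1 ≤ N, ENNReal.ofReal (cesaroPowMean p (fun n => |weightProd w i n|) N)

theorem cesaroPowMean_weightProd_le_toReal {w : ℤ → ℝ} {p : ℝ} (hR : weightMeanSup w p ≠ ⊤)
    {N : ℕ} (hN : 1 ≤ N) (i : ℤ) :
    cesaroPowMean p (fun n => |weightProd w i n|) N ≤ (weightMeanSup w p).toReal :=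
  (ENNReal.ofReal_le_iff_le_toReal hR).1 <|
    le_iSup_of_le i <| le_iSup_of_le N <| le_iSup_of_le hN le_rfl

section lp

variable {ι : Type*} {p : ℝ}

theorem lp_summable_abs_rpow (hp : 0 < p) (x : lp (fun _ : ι => ℝ) (ENNReal.ofReal p)) :
    Summable fun k => |x k| ^ p := by
  simpa [ENNReal.toReal_ofReal hp.le] using
    (lp.memℓp x).summable (by simpa [ENNReal.toReal_ofReal hp.le] using hp)

theorem lp_norm_rpow_eq_tsum_abs (hp : 0 < p) (x : lp (fun _ : ι => ℝ) (ENNReal.ofReal p)) :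
    ‖x‖ ^ p = ∑' k, |x k| ^ p := by
  simpa [ENNReal.toReal_ofReal hp.le] using
    lp.norm_rpow_eq_tsum (by simpa [ENNReal.toReal_ofReal hp.le] using hp) x

theorem lp_norm_single_one [DecidableEq ι] (hp : 0 < p) (i : ι) :
    ‖lp.single (E := fun _ : ι => ℝ) (ENNReal.ofReal p) i 1‖ = 1 := by
  simpa using lp.norm_single (E := fun _ : ι => ℝ) (ENNReal.ofReal_pos.2 hp) i 1

end lp

section WeightedShift

variable {p : ℝ} [Fact (1 ≤ ENNReal.ofReal p)] {w : ℤ → ℝ}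
  {B : lp (fun _ : ℤ => ℝ) (ENNReal.ofReal p) →L[ℝ] lp (fun _ : ℤ => ℝ) (ENNReal.ofReal p)}

def IsWeightedBackwardShift (w : ℤ → ℝ)
    (B : lp (fun _ : ℤ => ℝ) (ENNReal.ofReal p) →L[ℝ] lp (fun _ : ℤ => ℝ) (ENNReal.ofReal p)) :
    Prop :=
  ∀ (x : lp (fun _ : ℤ => ℝ) (ENNReal.ofReal p)) (n : ℤ), (B x : ∀ _ : ℤ, ℝ) n = w n * x (n + 1)

theorem exponent_pos_of_fact : 0 < p :=
  one_pos.trans_le (ENNReal.one_le_ofReal.1 Fact.out)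

theorem weightedShift_pow_apply_sub (hB : IsWeightedBackwardShift w B)
    (n : ℕ) (x : lp (fun _ : ℤ => ℝ) (ENNReal.ofReal p)) (k : ℤ) :
    ((B ^ n) x : ∀ _ : ℤ, ℝ) (k - n) = weightProd w k n * x k := by
  induction n generalizing k with
  | zero => simp [weightProd]
  | succ n ih =>
    rw [pow_succ', mul_apply_eq_comp, hB _ _, weightProd_succ,
      show k - ((n + 1 : ℕ) : ℤ) + 1 = k - n by push_cast; ring, ih]
    ring

theorem abs_weightedShift_pow_apply_sub_rpow (hB : IsWeightedBackwardShift w B)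
    (n : ℕ) (x : lp (fun _ : ℤ => ℝ) (ENNReal.ofReal p)) (k : ℤ) :
    |((B ^ n) x : ∀ _ : ℤ, ℝ) (k - n)| ^ p = |weightProd w k n| ^ p * |x k| ^ p := by
  rw [weightedShift_pow_apply_sub hB, abs_mul, Real.mul_rpow (abs_nonneg _) (abs_nonneg _)]

theorem summable_weightProd_rpow_mul (hB : IsWeightedBackwardShift w B)
    (n : ℕ) (x : lp (fun _ : ℤ => ℝ) (ENNReal.ofReal p)) :
    Summable fun k => |weightProd w k n| ^ p * |x k| ^ p :=
  ((Equiv.subRight (n : ℤ)).summable_iff.2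
    (lp_summable_abs_rpow exponent_pos_of_fact ((B ^ n) x))).congr
    (abs_weightedShift_pow_apply_sub_rpow hB n x)

theorem norm_weightedShift_pow_rpow (hB : IsWeightedBackwardShift w B)
    (n : ℕ) (x : lp (fun _ : ℤ => ℝ) (ENNReal.ofReal p)) :
    ‖(B ^ n) x‖ ^ p = ∑' k, |weightProd w k n| ^ p * |x k| ^ p := by
  rw [lp_norm_rpow_eq_tsum_abs exponent_pos_of_fact, ← (Equiv.subRight (n : ℤ)).tsum_eq]
  exact tsum_congr (abs_weightedShift_pow_apply_sub_rpow hB n x)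

theorem cesaroPowMean_orbit_eq_tsum (hB : IsWeightedBackwardShift w B)
    (N : ℕ) (x : lp (fun _ : ℤ => ℝ) (ENNReal.ofReal p)) :
    Summable (fun k => |x k| ^ p * cesaroPowMean p (fun n => |weightProd w k n|) N) ∧
      cesaroPowMean p (fun n => ‖(B ^ n) x‖) N
        = ∑' k, |x k| ^ p * cesaroPowMean p (fun n => |weightProd w k n|) N := by
  have hs := summable_weightProd_rpow_mul hB (x := x)
  have hterm : ∀ k, |x k| ^ p * cesaroPowMean p (fun n => |weightProd w k n|) N
      = (1 / N : ℝ) * ∑ n ∈ Finset.Icc 1 N, |weightProd w k n| ^ p * |x k| ^ p := fun k => by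
    simp only [cesaroPowMean, Finset.mul_sum]
    exact Finset.sum_congr rfl fun n _ => by ring
  simp_rw [hterm]
  refine ⟨(summable_sum fun n _ => hs n).mul_left _, ?_⟩
  rw [tsum_mul_left, Summable.tsum_finsetSum fun n _ => hs n, cesaroPowMean]
  simp_rw [norm_weightedShift_pow_rpow hB]

theorem cesaroPowMean_orbit_single (hB : IsWeightedBackwardShift w B) (i : ℤ) (N : ℕ) :
    cesaroPowMean p (fun n => ‖(B ^ n) (lp.single (E := fun _ : ℤ => ℝ) (ENNReal.ofReal p) i 1)‖) N
      = cesaroPowMean p (fun n => |weightProd w i n|) N := by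
  rw [(cesaroPowMean_orbit_eq_tsum hB N _).2, tsum_eq_single i fun k hk => by
    rw [lp.single_apply_ne _ _ _ hk, abs_zero, Real.zero_rpow exponent_pos_of_fact.ne', zero_mul]]
  simp

theorem cesaroPowMean_orbit_le (hB : IsWeightedBackwardShift w B) {N : ℕ} {C : ℝ}
    (hC : ∀ k, cesaroPowMean p (fun n => |weightProd w k n|) N ≤ C)
    (x : lp (fun _ : ℤ => ℝ) (ENNReal.ofReal p)) :
    cesaroPowMean p (fun n => ‖(B ^ n) x‖) N ≤ C * ‖x‖ ^ p := by
  have hp := exponent_pos_of_fact (p := p)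
  obtain ⟨hs, heq⟩ := cesaroPowMean_orbit_eq_tsum hB N x
  rw [heq, lp_norm_rpow_eq_tsum_abs hp, ← tsum_mul_left]
  refine hs.tsum_le_tsum (fun k => ?_) ((lp_summable_abs_rpow hp x).mul_left C)
  rw [mul_comm C]
  exact mul_le_mul_of_nonneg_left (hC k) (by positivity)

theorem iSup_cesaroPowMean_orbit_eq_weightMeanSup (hB : IsWeightedBackwardShift w B) :
    ⨆ x : {x : lp (fun _ : ℤ => ℝ) (ENNReal.ofReal p) // ‖x‖ = 1}, ⨆ N : ℕ, ⨆ _ : 1 ≤ N,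
      ENNReal.ofReal (cesaroPowMean p (fun n => ‖(B ^ n) x.1‖) N) = weightMeanSup w p := by
  apply le_antisymm
  · refine iSup_le fun x => iSup_le fun N => iSup_le fun hN => ?_
    by_cases hR : weightMeanSup w p = ⊤
    · exact hR ▸ le_top
    · rw [ENNReal.ofReal_le_iff_le_toReal hR]
      simpa [x.2] using cesaroPowMean_orbit_le hB (cesaroPowMean_weightProd_le_toReal hR hN) x.1
  · refine iSup_le fun i => iSup_le fun N => iSup_le fun hN => ?_
    refine le_iSup_of_le ⟨_, lp_norm_single_one exponent_pos_of_fact i⟩ <|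
      le_iSup_of_le N <| le_iSup_of_le hN ?_
    rw [cesaroPowMean_orbit_single hB]

theorem cesaroBounded_iff_weightMeanSup_ne_top (hB : IsWeightedBackwardShift w B) :
    (∃ C : ℝ, 0 < C ∧ ∀ x : lp (fun _ : ℤ => ℝ) (ENNReal.ofReal p), ∀ N : ℕ, 1 ≤ N →
        cesaroPowMean p (fun n => ‖(B ^ n) x‖) N ≤ C * ‖x‖ ^ p) ↔
      weightMeanSup w p ≠ ⊤ := by
  constructor
  · rintro ⟨C, -, hC⟩
    refine ne_top_of_le_ne_top (ENNReal.ofReal_ne_top (r := C)) <|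
      iSup_le fun i => iSup_le fun N => iSup_le fun hN => ENNReal.ofReal_le_ofReal ?_
    have hsingle := hC (lp.single _ i 1) N hN
    rwa [cesaroPowMean_orbit_single hB, lp_norm_single_one exponent_pos_of_fact, Real.one_rpow,
      mul_one] at hsingle
  · intro hR
    refine ⟨(weightMeanSup w p).toReal + 1, by positivity, fun x N hN => ?_⟩
    exact cesaroPowMean_orbit_le hB (fun k => (cesaroPowMean_weightProd_le_toReal hR hN k).trans
      (le_add_of_nonneg_right zero_le_one)) x

end WeightedShift

theorem stmt10_general (p : ℝ) [Fact (1 ≤ ENNReal.ofReal p)] (w : ℤ → ℝ)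
    (B : lp (fun _ : ℤ => ℝ) (ENNReal.ofReal p) →L[ℝ] lp (fun _ : ℤ => ℝ) (ENNReal.ofReal p))
    (hB : ∀ (x : lp (fun _ : ℤ => ℝ) (ENNReal.ofReal p)) (n : ℤ),
      (B x : ∀ _ : ℤ, ℝ) n = w n * x (n + 1)) :
    (⨆ x : {x : lp (fun _ : ℤ => ℝ) (ENNReal.ofReal p) // ‖x‖ = 1}, ⨆ N : ℕ, ⨆ _ : 1 ≤ N,
        ENNReal.ofReal ((1 / N : ℝ) * ∑ n ∈ Finset.Icc 1 N, ‖(B ^ n) x.1‖ ^ p))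
      = (⨆ i : ℤ, ⨆ N : ℕ, ⨆ _ : 1 ≤ N,
          ENNReal.ofReal ((1 / N : ℝ) * ∑ n ∈ Finset.Icc 1 N,
            |∏ j ∈ Finset.Icc 1 n, w (i - j)| ^ p)) ∧
    ((∃ C : ℝ, 0 < C ∧ ∀ x : lp (fun _ : ℤ => ℝ) (ENNReal.ofReal p), ∀ N : ℕ, 1 ≤ N →
        (1 / N : ℝ) * ∑ n ∈ Finset.Icc 1 N, ‖(B ^ n) x‖ ^ p ≤ C * ‖x‖ ^ p) ↔
      (⨆ i : ℤ, ⨆ N : ℕ, ⨆ _ : 1 ≤ N,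
          ENNReal.ofReal ((1 / N : ℝ) * ∑ n ∈ Finset.Icc 1 N,
            |∏ j ∈ Finset.Icc 1 n, w (i - j)| ^ p)) ≠ ⊤) :=
  ⟨iSup_cesaroPowMean_orbit_eq_weightMeanSup hB, cesaroBounded_iff_weightMeanSup_ne_top hB⟩

/-- For a bilateral weighted backward shift `B_w` on `ℓ^p(ℤ)`,
`N_p(B_w) = sup_{i ∈ ℤ, N ∈ ℕ} (1/N) Σ_{n=1}^{N} |w_{i-n} ⋯ w_{i-1}|^p`; in particular `B_w`
is `p`-absolutely Cesàro bounded iff this supremum is finite. -/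
theorem stmt10 (p : ℝ) (hp : 1 ≤ p) [Fact (1 ≤ ENNReal.ofReal p)] (w : ℤ → ℝ)
    (hw : ∃ C : ℝ, ∀ i, |w i| ≤ C)
    (B : lp (fun _ : ℤ => ℝ) (ENNReal.ofReal p) →L[ℝ] lp (fun _ : ℤ => ℝ) (ENNReal.ofReal p))
    (hB : ∀ (x : lp (fun _ : ℤ => ℝ) (ENNReal.ofReal p)) (n : ℤ),
      (B x : ∀ _ : ℤ, ℝ) n = w n * x (n + 1)) :
    (⨆ x : {x : lp (fun _ : ℤ => ℝ) (ENNReal.ofReal p) // ‖x‖ = 1}, ⨆ N : ℕ, ⨆ _ : 1 ≤ N,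
        ENNReal.ofReal ((1 / N : ℝ) * ∑ n ∈ Finset.Icc 1 N, ‖(B ^ n) x.1‖ ^ p))
      = (⨆ i : ℤ, ⨆ N : ℕ, ⨆ _ : 1 ≤ N,
          ENNReal.ofReal ((1 / N : ℝ) * ∑ n ∈ Finset.Icc 1 N,
            |∏ j ∈ Finset.Icc 1 n, w (i - j)| ^ p)) ∧
    ((∃ C : ℝ, 0 < C ∧ ∀ x : lp (fun _ : ℤ => ℝ) (ENNReal.ofReal p), ∀ N : ℕ, 1 ≤ N →
        (1 / N : ℝ) * ∑ n ∈ Finset.Icc 1 N, ‖(B ^ n) x‖ ^ p ≤ C * ‖x‖ ^ p) ↔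
      (⨆ i : ℤ, ⨆ N : ℕ, ⨆ _ : 1 ≤ N,
          ENNReal.ofReal ((1 / N : ℝ) * ∑ n ∈ Finset.Icc 1 N,
            |∏ j ∈ Finset.Icc 1 n, w (i - j)| ^ p)) ≠ ⊤) :=
  stmt10_general p w B hB
end

section
/- Fix 1 ≤ p < q < ∞ and let B_w be the unilateral weighted backward shift on ℓ^p(ℕ) with weights w_n = ((n+1)/n)^{1/q}. Then B_w is p-absolutely Cesàro bounded but not q-absolutely Cesàro bounded; in particular, B_w is not power-bounded. -/
/-!
With `c k = (k + 1) ^ (1 / q)` the weights are `w k = c (k + 1) / c k`, so `B ^ n` maps `x` to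
`k ↦ c (k + n) / c k * x (k + n)`. Hence `∑_{n ≤ N} ‖B ^ n x‖_p ^ p` weights `|x m| ^ p` by
`∑_{n ≤ min N m} ((m + 1) / (m - n + 1)) ^ (p / q)`, which is `O(N)` since `p / q < 1`
(compare with `∫ t ^ (-p / q)`). On the unit vector `e_N`,
`‖B ^ n e_N‖ ^ q = (N + 1) / (N - n + 1)`, so the `q`-th Cesàro means of `e_N` are at least the
harmonic numbers. Finally, a power-bounded operator is `r`-absolutely Cesàro bounded for every
`r ≥ 0`.
-/

open scoped ENNReal
open Finset

section Cesaro

variable {𝕜 E : Type*} [NontriviallyNormedField 𝕜] [NormedAddCommGroup E] [NormedSpace 𝕜 E]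

def IsAbsCesaroBounded (r : ℝ) (T : E →L[𝕜] E) : Prop :=
  ∃ C : ℝ, 0 < C ∧ ∀ x : E, ∀ N : ℕ, 1 ≤ N →
    (1 / N : ℝ) * ∑ n ∈ Icc 1 N, ‖(T ^ n) x‖ ^ r ≤ C * ‖x‖ ^ r

def IsPowerBounded (T : E →L[𝕜] E) : Prop :=
  ∃ C : ℝ, 0 < C ∧ ∀ n : ℕ, 1 ≤ n → ‖T ^ n‖ ≤ C

theorem IsPowerBounded.isAbsCesaroBounded {T : E →L[𝕜] E} (hT : IsPowerBounded T) {r : ℝ}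
    (hr : 0 ≤ r) : IsAbsCesaroBounded r T := by
  obtain ⟨C, hC, hTC⟩ := hT
  refine ⟨C ^ r, by positivity, fun x N hN => ?_⟩
  have hterm : ∀ n ∈ Icc 1 N, ‖(T ^ n) x‖ ^ r ≤ C ^ r * ‖x‖ ^ r := fun n hn => by
    rw [← Real.mul_rpow hC.le (norm_nonneg x)]
    exact Real.rpow_le_rpow (norm_nonneg _)
      ((T ^ n).le_of_opNorm_le (hTC n (mem_Icc.1 hn).1) x) hr
  have hN0 : (0 : ℝ) < N := by exact_mod_cast hN
  calc (1 / N : ℝ) * ∑ n ∈ Icc 1 N, ‖(T ^ n) x‖ ^ r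
      ≤ (1 / N : ℝ) * (N * (C ^ r * ‖x‖ ^ r)) := by
        gcongr
        simpa using sum_le_card_nsmul _ _ _ hterm
    _ = C ^ r * ‖x‖ ^ r := by field_simp

end Cesaro

theorem Real.mul_add_one_rpow_sub_one_le {s : ℝ} (hs0 : 0 ≤ s) (hs1 : s ≤ 1) {x : ℝ}
    (hx : 0 ≤ x) : s * (x + 1) ^ (s - 1) ≤ (x + 1) ^ s - x ^ s := by
  have hx1 : 0 < x + 1 := by linarith
  set t := (x + 1)⁻¹
  have ht : t ≤ 1 := inv_le_one_of_one_le₀ (by linarith)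
  have hfactor : x ^ s = (x + 1) ^ s * (1 + -t) ^ s := by
    rw [← Real.mul_rpow hx1.le (by linarith)]
    congr 1
    rw [mul_add, mul_neg, mul_one, mul_inv_cancel₀ hx1.ne']
    ring
  have hbernoulli : (1 + -t) ^ s ≤ 1 + s * -t :=
    rpow_one_add_le_one_add_mul_self (by linarith) hs0 hs1
  calc s * (x + 1) ^ (s - 1) = (x + 1) ^ s * (1 - (1 + s * -t)) := by
        rw [Real.rpow_sub_one hx1.ne']; ring
    _ ≤ (x + 1) ^ s * (1 - (1 + -t) ^ s) := by gcongr
    _ = (x + 1) ^ s - x ^ s := by rw [hfactor]; ring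

theorem sum_range_add_one_rpow_neg_le {r : ℝ} (hr0 : 0 ≤ r) (hr1 : r < 1) (L : ℕ) :
    ∑ k ∈ range L, ((k : ℝ) + 1) ^ (-r) ≤ (L : ℝ) ^ (1 - r) / (1 - r) := by
  have hs : 0 < 1 - r := by linarith
  induction L with
  | zero => simp [Real.zero_rpow hs.ne']
  | succ L ih =>
    have hstep := Real.mul_add_one_rpow_sub_one_le hs.le (by linarith) (Nat.cast_nonneg L)
    rw [sub_sub_cancel_left] at hstep
    rw [sum_range_succ, Nat.cast_succ, le_div_iff₀ hs]
    rw [le_div_iff₀ hs] at ih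
    nlinarith

theorem sum_Icc_one_sub_eq_sum_range {M : Type*} [AddCommMonoid M] (f : ℕ → M) (L : ℕ) :
    ∑ n ∈ Icc 1 L, f (L - n) = ∑ k ∈ range L, f k := by
  rw [← Ico_add_one_right_eq_Icc, sum_Ico_reflect f 1 le_rfl, Nat.add_sub_cancel, Nat.sub_self,
    range_eq_Ico]

theorem sum_Icc_add_one_div_sub_rpow_le {r : ℝ} (hr0 : 0 ≤ r) (hr1 : r < 1) (L : ℕ) :
    ∑ n ∈ Icc 1 L, (((L : ℝ) + 1) / ((L - n : ℕ) + 1)) ^ r ≤ ((L : ℝ) + 1) / (1 - r) := by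
  have hL : (0 : ℝ) < L + 1 := by positivity
  rw [sum_Icc_one_sub_eq_sum_range (fun k => (((L : ℝ) + 1) / ((k : ℕ) + 1)) ^ r)]
  calc ∑ k ∈ range L, (((L : ℝ) + 1) / ((k : ℝ) + 1)) ^ r
      = ((L : ℝ) + 1) ^ r * ∑ k ∈ range L, ((k : ℝ) + 1) ^ (-r) := by
        rw [mul_sum]
        refine sum_congr rfl fun k _ => ?_
        rw [Real.div_rpow hL.le (by positivity), Real.rpow_neg (by positivity), div_eq_mul_inv]
    _ ≤ ((L : ℝ) + 1) ^ r * (((L : ℝ) + 1) ^ (1 - r) / (1 - r)) := by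
        gcongr
        refine (sum_range_add_one_rpow_neg_le hr0 hr1 L).trans ?_
        gcongr
        linarith
    _ = ((L : ℝ) + 1) / (1 - r) := by
        rw [← mul_div_assoc, ← Real.rpow_add hL, add_sub_cancel, Real.rpow_one]

theorem add_one_div_sub_add_one_le_of_le {n L m : ℕ} (hnL : n ≤ L) (hLm : L ≤ m) :
    ((m : ℝ) + 1) / ((m - n : ℕ) + 1) ≤ ((L : ℝ) + 1) / ((L - n : ℕ) + 1) := by
  rw [Nat.cast_sub (hnL.trans hLm), Nat.cast_sub hnL,
    div_le_div_iff₀ (by linarith [(Nat.cast_le (α := ℝ)).2 (hnL.trans hLm)])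
      (by linarith [(Nat.cast_le (α := ℝ)).2 hnL])]
  have : (L : ℝ) ≤ m := by exact_mod_cast hLm
  nlinarith [(Nat.cast_nonneg n : (0 : ℝ) ≤ n)]

theorem sum_Icc_ite_add_one_div_sub_rpow_le {r : ℝ} (hr0 : 0 ≤ r) (hr1 : r < 1) {N : ℕ}
    (hN : 1 ≤ N) (m : ℕ) :
    ∑ n ∈ Icc 1 N, (if n ≤ m then (((m : ℝ) + 1) / ((m - n : ℕ) + 1)) ^ r else 0)
      ≤ 2 / (1 - r) * N := by
  set L := min N m
  have hfilter : (Icc 1 N).filter (· ≤ m) = Icc 1 L := by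
    ext n; simp only [mem_filter, mem_Icc, le_min_iff, L]; omega
  rw [← sum_filter, hfilter]
  have hL : ((L : ℝ) + 1) ≤ 2 * N := by
    have : (L : ℝ) ≤ N := by exact_mod_cast min_le_left N m
    have : (1 : ℝ) ≤ N := by exact_mod_cast hN
    linarith
  calc ∑ n ∈ Icc 1 L, (((m : ℝ) + 1) / ((m - n : ℕ) + 1)) ^ r
      ≤ ∑ n ∈ Icc 1 L, (((L : ℝ) + 1) / ((L - n : ℕ) + 1)) ^ r := by
        refine sum_le_sum fun n hn => Real.rpow_le_rpow (by positivity) ?_ hr0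
        exact add_one_div_sub_add_one_le_of_le (mem_Icc.1 hn).2 (min_le_right N m)
    _ ≤ ((L : ℝ) + 1) / (1 - r) := sum_Icc_add_one_div_sub_rpow_le hr0 hr1 L
    _ ≤ 2 / (1 - r) * N := by
        rw [div_mul_eq_mul_div]
        gcongr

theorem sum_tsum_mul_le_of_sum_le {ι β : Type*} (s : Finset ι) {a : ι → β → ℝ} {f : β → ℝ}
    {K : ℝ} (ha : ∀ i m, 0 ≤ a i m) (hf : Summable f) (hf0 : ∀ m, 0 ≤ f m)
    (hK : ∀ m, ∑ i ∈ s, a i m ≤ K) : ∑ i ∈ s, ∑' m, a i m * f m ≤ K * ∑' m, f m := by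
  have hsummable : ∀ i ∈ s, Summable fun m => a i m * f m := fun i hi =>
    (hf.mul_left K).of_nonneg_of_le (fun m => mul_nonneg (ha i m) (hf0 m)) fun m =>
      mul_le_mul_of_nonneg_right
        ((single_le_sum (fun j _ => ha j m) hi).trans (hK m)) (hf0 m)
  rw [← Summable.tsum_finsetSum hsummable, ← tsum_mul_left]
  refine Summable.tsum_le_tsum (fun m => ?_) (summable_sum hsummable) (hf.mul_left K)
  rw [← sum_mul]
  exact mul_le_mul_of_nonneg_right (hK m) (hf0 m)

section WeightedShift

variable {p : ℝ≥0∞} [Fact (1 ≤ p)] {c : ℕ → ℝ}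
  {B : lp (fun _ : ℕ => ℝ) p →L[ℝ] lp (fun _ : ℕ => ℝ) p}

theorem pow_apply_of_apply_eq_div (hc : ∀ k, c k ≠ 0)
    (hB : ∀ x k, B x k = c (k + 1) / c k * x (k + 1)) (n : ℕ) (x : lp (fun _ : ℕ => ℝ) p)
    (k : ℕ) : (B ^ n) x k = c (k + n) / c k * x (k + n) := by
  induction n generalizing x k with
  | zero => simp [div_self (hc k)]
  | succ n ih =>
    rw [pow_succ, mul_apply_eq_comp, ih, hB, ← add_assoc]
    field_simp [hc (k + n)]

theorem norm_pow_apply_rpow_eq_tsum (hc : ∀ k, c k ≠ 0)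
    (hB : ∀ x k, B x k = c (k + 1) / c k * x (k + 1)) (hp : p ≠ ∞) (n : ℕ)
    (x : lp (fun _ : ℕ => ℝ) p) :
    ‖(B ^ n) x‖ ^ p.toReal =
      ∑' m, (if n ≤ m then |c m / c (m - n)| ^ p.toReal else 0) * ‖x m‖ ^ p.toReal := by
  have hp0 : 0 < p.toReal := ENNReal.toReal_pos (zero_lt_one.trans_le Fact.out).ne' hp
  set g : ℕ → ℝ := fun m =>
    (if n ≤ m then |c m / c (m - n)| ^ p.toReal else 0) * ‖x m‖ ^ p.toReal
  have hsupport : Function.support g ⊆ Set.range (· + n) := fun m hm => by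
    by_cases hnm : n ≤ m
    · exact ⟨m - n, Nat.sub_add_cancel hnm⟩
    · simp [g, hnm] at hm
  rw [lp.norm_rpow_eq_tsum hp0, ← (add_left_injective n).tsum_eq hsupport]
  refine tsum_congr fun k => ?_
  simp only [g, pow_apply_of_apply_eq_div hc hB, le_add_self, if_true, Nat.add_sub_cancel,
    norm_mul, Real.norm_eq_abs, Real.mul_rpow (abs_nonneg _) (abs_nonneg _)]

theorem pow_single_one_of_apply_eq_div (hc : ∀ k, c k ≠ 0)
    (hB : ∀ x k, B x k = c (k + 1) / c k * x (k + 1)) {n N : ℕ} (hnN : n ≤ N) :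
    (B ^ n) (lp.single p N 1) = lp.single p (N - n) (c N / c (N - n)) := by
  ext k
  rw [pow_apply_of_apply_eq_div hc hB, lp.single_apply, lp.single_apply]
  by_cases hk : k = N - n
  · subst hk
    simp [Nat.sub_add_cancel hnN]
  · have : k + n ≠ N := by omega
    simp [hk, this]

theorem norm_pow_single_one_of_apply_eq_div (hc : ∀ k, c k ≠ 0)
    (hB : ∀ x k, B x k = c (k + 1) / c k * x (k + 1)) {n N : ℕ} (hnN : n ≤ N) :
    ‖(B ^ n) (lp.single p N 1)‖ = |c N / c (N - n)| := by
  rw [pow_single_one_of_apply_eq_div hc hB hnN,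
    lp.norm_single (zero_lt_one.trans_le Fact.out), Real.norm_eq_abs]

end WeightedShift

section PowerWeights

variable {p : ℝ≥0∞} [Fact (1 ≤ p)] {q : ℝ}
  {B : lp (fun _ : ℕ => ℝ) p →L[ℝ] lp (fun _ : ℕ => ℝ) p}

theorem add_two_div_add_one_rpow_eq_div (q : ℝ) (k : ℕ) :
    (((k : ℝ) + 2) / ((k : ℝ) + 1)) ^ (1 / q) =
      (((k + 1 : ℕ) : ℝ) + 1) ^ (1 / q) / ((k : ℝ) + 1) ^ (1 / q) := by
  rw [← Real.div_rpow (by positivity) (by positivity)]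
  push_cast
  ring_nf

theorem abs_rpow_div_rpow_rpow (q t : ℝ) (a b : ℕ) :
    |((a : ℝ) + 1) ^ (1 / q) / ((b : ℝ) + 1) ^ (1 / q)| ^ t =
      (((a : ℝ) + 1) / ((b : ℝ) + 1)) ^ (t / q) := by
  rw [abs_of_nonneg (by positivity), ← Real.div_rpow (by positivity) (by positivity),
    ← Real.rpow_mul (by positivity), one_div_mul_eq_div]

theorem isAbsCesaroBounded_toReal_of_shift_eq (hp : p ≠ ∞) (hpq : p.toReal < q)
    (hB : ∀ x k, B x k = (((k : ℝ) + 2) / ((k : ℝ) + 1)) ^ (1 / q) * x (k + 1)) :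
    IsAbsCesaroBounded p.toReal B := by
  set c : ℕ → ℝ := fun k => ((k : ℝ) + 1) ^ (1 / q)
  have hc : ∀ k, c k ≠ 0 := fun k => by positivity
  have hB' : ∀ x k, B x k = c (k + 1) / c k * x (k + 1) := fun x k => by
    rw [hB, add_two_div_add_one_rpow_eq_div]
  have hp0 : 0 < p.toReal := ENNReal.toReal_pos (zero_lt_one.trans_le Fact.out).ne' hp
  have hr0 : 0 ≤ p.toReal / q := div_nonneg hp0.le (hp0.trans hpq).le
  have hr1 : p.toReal / q < 1 := (div_lt_one (hp0.trans hpq)).2 hpq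
  refine ⟨2 / (1 - p.toReal / q), by bound, fun x N hN => ?_⟩
  have hcoeff : ∀ m, ∑ n ∈ Icc 1 N, (if n ≤ m then |c m / c (m - n)| ^ p.toReal else 0)
      ≤ 2 / (1 - p.toReal / q) * N := fun m => by
    simp only [c, abs_rpow_div_rpow_rpow]
    exact sum_Icc_ite_add_one_div_sub_rpow_le hr0 hr1 hN m
  have hsum := sum_tsum_mul_le_of_sum_le (Icc 1 N) (fun n m => by split_ifs <;> positivity)
    ((lp.memℓp x).summable hp0) (fun m => by positivity) hcoeff
  simp only [← norm_pow_apply_rpow_eq_tsum hc hB' hp, ← lp.norm_rpow_eq_tsum hp0] at hsum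
  have hN0 : (0 : ℝ) < N := by exact_mod_cast hN
  calc (1 / N : ℝ) * ∑ n ∈ Icc 1 N, ‖(B ^ n) x‖ ^ p.toReal
      ≤ (1 / N : ℝ) * (2 / (1 - p.toReal / q) * N * ‖x‖ ^ p.toReal) := by gcongr
    _ = 2 / (1 - p.toReal / q) * ‖x‖ ^ p.toReal := by field_simp

theorem norm_pow_single_one_rpow_of_shift_eq (hq : q ≠ 0)
    (hB : ∀ x k, B x k = (((k : ℝ) + 2) / ((k : ℝ) + 1)) ^ (1 / q) * x (k + 1)) {n N : ℕ}
    (hnN : n ≤ N) : ‖(B ^ n) (lp.single p N 1)‖ ^ q = ((N : ℝ) + 1) / ((N - n : ℕ) + 1) := by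
  set c : ℕ → ℝ := fun k => ((k : ℝ) + 1) ^ (1 / q)
  have hB' : ∀ x k, B x k = c (k + 1) / c k * x (k + 1) := fun x k => by
    rw [hB, add_two_div_add_one_rpow_eq_div]
  rw [norm_pow_single_one_of_apply_eq_div (fun k => by positivity) hB' hnN,
    abs_rpow_div_rpow_rpow, div_self hq, Real.rpow_one]

theorem not_isAbsCesaroBounded_of_shift_eq (hq : q ≠ 0)
    (hB : ∀ x k, B x k = (((k : ℝ) + 2) / ((k : ℝ) + 1)) ^ (1 / q) * x (k + 1)) :
    ¬ IsAbsCesaroBounded q B := by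
  rintro ⟨C, -, hC⟩
  obtain ⟨N, hCN, hN⟩ :=
    ((Real.tendsto_sum_range_one_div_nat_succ_atTop.eventually_gt_atTop C).and
      (Filter.eventually_ge_atTop 1)).exists
  set H := ∑ k ∈ range N, 1 / ((k : ℝ) + 1)
  have hsum : ∑ n ∈ Icc 1 N, ‖(B ^ n) (lp.single p N 1)‖ ^ q = ((N : ℝ) + 1) * H := by
    rw [sum_congr rfl fun n hn =>
        norm_pow_single_one_rpow_of_shift_eq hq hB (mem_Icc.1 hn).2,
      sum_Icc_one_sub_eq_sum_range (fun k => ((N : ℝ) + 1) / ((k : ℕ) + 1)), mul_sum]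
    simp only [mul_one_div]
  have hbound := hC (lp.single p N 1) N hN
  rw [hsum, lp.norm_single (zero_lt_one.trans_le Fact.out), norm_one, Real.one_rpow,
    mul_one] at hbound
  have hN0 : (0 : ℝ) < N := by exact_mod_cast hN
  rw [← mul_assoc, one_div_mul_eq_div] at hbound
  have : H ≤ (N + 1) / N * H :=
    le_mul_of_one_le_left (by positivity) ((one_le_div hN0).2 (by linarith))
  linarith

end PowerWeights

/-- For `1 ≤ p < q < ∞`, the unilateral weighted backward shift on `ℓ^p(ℕ)` with weights
`w_n = ((n+1)/n)^{1/q}` (here `0`-indexed: `w n = ((n+2)/(n+1))^{1/q}`) is `p`-absolutely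
Cesàro bounded but not `q`-absolutely Cesàro bounded; in particular it is not power-bounded. -/
theorem stmt11 (p q : ℝ) (hp : 1 ≤ p) (hpq : p < q) [Fact (1 ≤ ENNReal.ofReal p)]
    (w : ℕ → ℝ) (hw : ∀ n : ℕ, w n = (((n : ℝ) + 2) / ((n : ℝ) + 1)) ^ (1 / q))
    (B : lp (fun _ : ℕ => ℝ) (ENNReal.ofReal p) →L[ℝ] lp (fun _ : ℕ => ℝ) (ENNReal.ofReal p))
    (hB : ∀ (x : lp (fun _ : ℕ => ℝ) (ENNReal.ofReal p)) (n : ℕ),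
      (B x : ∀ _ : ℕ, ℝ) n = w n * x (n + 1)) :
    (∃ C : ℝ, 0 < C ∧ ∀ x : lp (fun _ : ℕ => ℝ) (ENNReal.ofReal p), ∀ N : ℕ, 1 ≤ N →
        (1 / N : ℝ) * ∑ n ∈ Finset.Icc 1 N, ‖(B ^ n) x‖ ^ p ≤ C * ‖x‖ ^ p) ∧
    ¬ (∃ C : ℝ, 0 < C ∧ ∀ x : lp (fun _ : ℕ => ℝ) (ENNReal.ofReal p), ∀ N : ℕ, 1 ≤ N →
        (1 / N : ℝ) * ∑ n ∈ Finset.Icc 1 N, ‖(B ^ n) x‖ ^ q ≤ C * ‖x‖ ^ q) ∧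
    ¬ (∃ C : ℝ, 0 < C ∧ ∀ n : ℕ, 1 ≤ n → ‖B ^ n‖ ≤ C) := by
  have hB' : ∀ x k, B x k = (((k : ℝ) + 2) / ((k : ℝ) + 1)) ^ (1 / q) * x (k + 1) :=
    fun x k => by rw [hB, hw]
  have hp' : (ENNReal.ofReal p).toReal = p := ENNReal.toReal_ofReal (by linarith)
  have hcesaro_p : IsAbsCesaroBounded p B := by
    simpa only [hp'] using
      isAbsCesaroBounded_toReal_of_shift_eq ENNReal.ofReal_ne_top (hp'.symm ▸ hpq) hB'
  have hcesaro_q : ¬ IsAbsCesaroBounded q B :=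
    not_isAbsCesaroBounded_of_shift_eq (by linarith) hB'
  exact ⟨hcesaro_p, hcesaro_q,
    fun hpow => hcesaro_q (IsPowerBounded.isAbsCesaroBounded hpow (by linarith))⟩
end

section
/- Let w be the sequence on ℕ obtained by concatenating, for n = 2, 3, 4, …, the blocks (e^{1/n}, …, e^{1/n} (n times), 1/e). Then sup_{N∈ℕ} (1/N) Σ_{n=1}^N (sup_{i∈ℕ} |w_i ⋯ w_{i+n-1}|)^p = e^p, while sup_{i∈ℕ, N∈ℕ} (1/N) Σ_{n=1}^{min{N, i-1}} |w_{i-n} ⋯ w_{i-1}|^p < e^p, for any fixed p ∈ [1,∞). In particular, these two Cesàro-type suprema differ for this weight sequence. -/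
/-!
Write `w = exp ∘ a`, where `a` is `1/n` on the first `n` entries of the block for `n` and `-1` on
its last entry, so every block has `a`-sum `0`. A sum of consecutive values of `a` starting at
entry `k` of the block for `n` is at most `1 - k/n`, the positive mass left in that block, and
at most `length/n`. The first bound shows that forward products are at most `e`, with equality
on a whole block, so the first supremum is that of the Cesàro means of a sequence that is `e^p`
from `n = 2` on. For the backward averages both bounds lie in `[0, 1]`, where convexity gives
`exp (p s) ≤ 1 + s (e^p - 1)`. Averaged over the tail of a block, `1 - k/n` is at most `1/2`,
and inside the block containing `i - 1` the bound `length/n` averages to at most `3/4`, so every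
backward average is at most `1 + (3/4)(e^p - 1) < e^p`.
-/

open Finset Filter Topology

/-- `blockCoord q = (n, k)` when position `q` is entry `k ∈ [0, n]` of the block for `n`. -/
def blockCoord : ℕ → ℕ × ℕ
  | 0 => (2, 0)
  | q + 1 =>
    if (blockCoord q).2 < (blockCoord q).1 then ((blockCoord q).1, (blockCoord q).2 + 1)
    else ((blockCoord q).1 + 1, 0)

theorem two_le_blockCoord_fst (q : ℕ) : 2 ≤ (blockCoord q).1 := by
  induction q with
  | zero => rfl
  | succ q ih => rw [blockCoord]; split <;> simp <;> omega

theorem blockCoord_snd_le_fst (q : ℕ) : (blockCoord q).2 ≤ (blockCoord q).1 := by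
  induction q with
  | zero => decide
  | succ q ih => rw [blockCoord]; split <;> simp; omega

theorem blockCoord_snd_le (q : ℕ) : (blockCoord q).2 ≤ q := by
  induction q with
  | zero => decide
  | succ q ih => rw [blockCoord]; split <;> simp; omega

theorem monotone_blockCoord_fst : Monotone fun q => (blockCoord q).1 :=
  monotone_nat_of_le_succ fun q => by rw [blockCoord]; split <;> simp

theorem blockCoord_sub {i t : ℕ} (ht : t ≤ (blockCoord i).2) :
    blockCoord (i - t) = ((blockCoord i).1, (blockCoord i).2 - t) := by
  induction t with
  | zero => rfl
  | succ t ih =>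
    have hprev : i - t = i - (t + 1) + 1 := by have := blockCoord_snd_le i; omega
    have h := ih (by omega)
    rw [hprev, blockCoord] at h
    split at h <;> simp only [Prod.mk.injEq] at h <;> ext <;> simp <;> omega

theorem blockCoord_snd_eq_fst {q : ℕ} (h : ¬(blockCoord q).2 < (blockCoord q).1) :
    (blockCoord q).2 = (blockCoord q).1 :=
  le_antisymm (blockCoord_snd_le_fst q) (not_lt.1 h)

theorem cast_blockCoord_fst_pos (q : ℕ) : (0 : ℝ) < (blockCoord q).1 := by
  have := two_le_blockCoord_fst q; positivity

noncomputable def logWeight (q : ℕ) : ℝ :=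
  if (blockCoord q).2 < (blockCoord q).1 then ((blockCoord q).1 : ℝ)⁻¹ else -1

noncomputable def tailMass (q : ℕ) : ℝ := 1 - (blockCoord q).2 / (blockCoord q).1

/-- For `blockCoord q = (n, k)` this is `∑_{j<k} (1 - j/n) - k/2`, the sum of `tailMass - 1/2`
over the part of the block before `q`. -/
noncomputable def blockPotential (q : ℕ) : ℝ :=
  (blockCoord q).2 * ((blockCoord q).1 - (blockCoord q).2 + 1 : ℝ) / (2 * (blockCoord q).1)

theorem logWeight_le_inv_of_le {q r : ℕ} (h : q ≤ r) :
    logWeight r ≤ ((blockCoord q).1 : ℝ)⁻¹ := by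
  have hmono : ((blockCoord q).1 : ℝ)⁻¹ ≥ ((blockCoord r).1 : ℝ)⁻¹ :=
    inv_anti₀ (cast_blockCoord_fst_pos q) (by exact_mod_cast monotone_blockCoord_fst h)
  have := cast_blockCoord_fst_pos r
  unfold logWeight; split <;> [linarith; linarith [inv_pos.2 this]]

theorem logWeight_le_half (q : ℕ) : logWeight q ≤ 1 / 2 := by
  have h2 : (2 : ℝ) ≤ (blockCoord 0).1 := by exact_mod_cast two_le_blockCoord_fst 0
  calc logWeight q ≤ ((blockCoord 0).1 : ℝ)⁻¹ := logWeight_le_inv_of_le (Nat.zero_le q)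
    _ ≤ 1 / 2 := by rw [one_div]; exact inv_anti₀ two_pos h2

theorem tailMass_nonneg (q : ℕ) : 0 ≤ tailMass q := by
  have : ((blockCoord q).2 : ℝ) ≤ (blockCoord q).1 := by exact_mod_cast blockCoord_snd_le_fst q
  rw [tailMass, sub_nonneg, div_le_one (cast_blockCoord_fst_pos q)]
  exact this

theorem tailMass_le_one (q : ℕ) : tailMass q ≤ 1 := by
  have := cast_blockCoord_fst_pos q
  rw [tailMass, sub_le_self_iff]
  positivity

theorem tailMass_eq_tailMass_succ_add (q : ℕ) : tailMass q = tailMass (q + 1) + logWeight q := by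
  have hn := cast_blockCoord_fst_pos q
  unfold tailMass logWeight
  rw [blockCoord]
  split_ifs with h
  · push_cast; field_simp; ring
  · simp [blockCoord_snd_eq_fst h, div_self hn.ne']

theorem blockPotential_succ_sub (q : ℕ) :
    blockPotential (q + 1) - blockPotential q = tailMass q - 1 / 2 := by
  have hn := cast_blockCoord_fst_pos q
  unfold blockPotential tailMass
  rw [blockCoord]
  split_ifs with h
  · push_cast; field_simp; ring
  · simp only [blockCoord_snd_eq_fst h]; field_simp; simp

theorem blockPotential_nonneg (q : ℕ) : 0 ≤ blockPotential q := by
  have : ((blockCoord q).2 : ℝ) ≤ (blockCoord q).1 := by exact_mod_cast blockCoord_snd_le_fst q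
  have := cast_blockCoord_fst_pos q
  unfold blockPotential
  apply div_nonneg (mul_nonneg (Nat.cast_nonneg _) (by linarith)) (by linarith)

theorem sum_logWeight_Ico_le_tailMass (d q : ℕ) :
    ∑ r ∈ Ico q (q + d), logWeight r ≤ tailMass q := by
  induction d generalizing q with
  | zero => simpa using tailMass_nonneg q
  | succ d ih =>
    rw [← add_assoc, sum_eq_sum_Ico_succ_bot (by omega), add_right_comm,
      tailMass_eq_tailMass_succ_add q]
    linarith [ih (q + 1)]

theorem sum_logWeight_Ico_le_div (d q : ℕ) :
    ∑ r ∈ Ico q (q + d), logWeight r ≤ d / (blockCoord q).1 :=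
  calc ∑ r ∈ Ico q (q + d), logWeight r
        ≤ ∑ _r ∈ Ico q (q + d), ((blockCoord q).1 : ℝ)⁻¹ :=
        sum_le_sum fun r hr => logWeight_le_inv_of_le (mem_Ico.1 hr).1
    _ = d / (blockCoord q).1 := by simp [div_eq_mul_inv]

theorem sum_tailMass_Ico_le {x y : ℕ} (hxy : x ≤ y) (hy : (blockCoord y).2 = 0) :
    ∑ q ∈ Ico x y, tailMass q ≤ ((y : ℝ) - x) / 2 := by
  have htelescope :
      ∑ q ∈ Ico x y, (tailMass q - 1 / 2) = blockPotential y - blockPotential x := by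
    simp_rw [← blockPotential_succ_sub]
    exact sum_Ico_sub blockPotential hxy
  have hpot : blockPotential y = 0 := by simp [blockPotential, hy]
  rw [sum_sub_distrib, hpot, sum_const, Nat.card_Ico, nsmul_eq_mul, Nat.cast_sub hxy] at htelescope
  linarith [blockPotential_nonneg x]

section ExpWeights

variable {w a : ℕ → ℝ} (hw : ∀ q, w q = Real.exp (a q))
include hw

theorem prod_range_eq_exp_sum_Ico (i n : ℕ) :
    ∏ j ∈ range n, w (i + j) = Real.exp (∑ r ∈ Ico i (i + n), a r) := by
  rw [sum_Ico_eq_sum_range, Real.exp_sum, Nat.add_sub_cancel_left]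
  simp only [hw]

theorem prod_Icc_sub_eq_exp_sum_Ico {i n : ℕ} (hn : n ≤ i) :
    ∏ j ∈ Icc 1 n, w (i - j) = Real.exp (∑ r ∈ Ico (i - n) i, a r) := by
  rw [← Finset.Ico_add_one_right_eq_Icc, prod_Ico_reflect _ _ (by omega), Real.exp_sum]
  simp only [hw]
  congr 2; omega

end ExpWeights

theorem iSup_abs_prod_range_one_eq {w : ℕ → ℝ} (hw : ∀ q, w q = Real.exp (logWeight q)) :
    ⨆ i, |∏ j ∈ range 1, w (i + j)| = Real.exp (1 / 2) := by
  have habs (i : ℕ) : |∏ j ∈ range 1, w (i + j)| = Real.exp (logWeight i) := by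
    simp [hw, abs_of_pos (Real.exp_pos _)]
  have hle (i : ℕ) : |∏ j ∈ range 1, w (i + j)| ≤ Real.exp (1 / 2) := by
    rw [habs]; exact Real.exp_le_exp.2 (logWeight_le_half i)
  refine le_antisymm (ciSup_le hle) (le_ciSup_of_le ⟨_, Set.forall_mem_range.2 hle⟩ 0 ?_)
  rw [habs, logWeight, blockCoord]
  norm_num

theorem iSup_abs_prod_range_eq_exp_one {w : ℕ → ℝ} (hw : ∀ q, w q = Real.exp (logWeight q))
    {n i : ℕ} (hn : 1 ≤ n) (hblock : ∀ k < n, w (i + k) = Real.exp (1 / n)) :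
    ⨆ i, |∏ j ∈ range n, w (i + j)| = Real.exp 1 := by
  have hle (i : ℕ) : |∏ j ∈ range n, w (i + j)| ≤ Real.exp 1 := by
    rw [prod_range_eq_exp_sum_Ico hw, abs_of_pos (Real.exp_pos _), Real.exp_le_exp]
    exact (sum_logWeight_Ico_le_tailMass n i).trans (tailMass_le_one i)
  refine le_antisymm (ciSup_le hle) (le_ciSup_of_le ⟨_, Set.forall_mem_range.2 hle⟩ i ?_)
  have hn' : (n : ℝ) ≠ 0 := by positivity
  rw [prod_congr rfl fun k hk => hblock k (mem_range.1 hk), prod_const, card_range,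
    ← Real.exp_nat_mul, mul_one_div_cancel hn', abs_of_pos (Real.exp_pos _)]

theorem iSup_cesaro_eq {c : ℕ → ℝ} {E : ℝ} (hE : 0 ≤ E)
    (hle : ∀ n, 1 ≤ n → c n ≤ E) (hlim : Tendsto c atTop (𝓝 E)) :
    ⨆ N : ℕ, ⨆ _ : 1 ≤ N, (1 / N : ℝ) * ∑ n ∈ Icc 1 N, c n = E := by
  have hsum (N : ℕ) : ∑ n ∈ Icc 1 N, c n = ∑ n ∈ range N, c (n + 1) := by
    rw [← Finset.Ico_add_one_right_eq_Icc, sum_Ico_eq_sum_range]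
    simp [add_comm]
  have hmean_le (N : ℕ) : (⨆ _ : 1 ≤ N, (1 / N : ℝ) * ∑ n ∈ Icc 1 N, c n) ≤ E := by
    refine Real.iSup_le (fun hN => ?_) hE
    have hN' : (0 : ℝ) < N := by exact_mod_cast hN
    rw [one_div_mul_eq_div, div_le_iff₀ hN']
    calc ∑ n ∈ Icc 1 N, c n ≤ ∑ _n ∈ Icc 1 N, E :=
          sum_le_sum fun n hn => hle n (mem_Icc.1 hn).1
      _ = E * N := by simp [mul_comm]
  refine le_antisymm (ciSup_le hmean_le)
    (le_of_tendsto (hlim.comp (tendsto_add_atTop_nat 1)).cesaro ?_)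
  filter_upwards [eventually_ge_atTop 1] with N hN
  refine le_ciSup_of_le ⟨E, Set.forall_mem_range.2 hmean_le⟩ N ?_
  rw [ciSup_pos hN, hsum, one_div]
  rfl

theorem Real.exp_mul_le_one_add_mul_sub_one {v : ℝ} (hv0 : 0 ≤ v) (hv1 : v ≤ 1) (p : ℝ) :
    Real.exp (v * p) ≤ 1 + v * (Real.exp p - 1) := by
  have h := convexOn_exp.2 (Set.mem_univ 0) (Set.mem_univ p) (sub_nonneg.2 hv1) hv0 (by ring)
  simp only [smul_eq_mul, mul_zero, zero_add, Real.exp_zero] at h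
  linarith

noncomputable def backBound (i n : ℕ) : ℝ := min (tailMass (i - n)) (n / (blockCoord (i - n)).1)

theorem backBound_nonneg (i n : ℕ) : 0 ≤ backBound i n :=
  le_min (tailMass_nonneg _) (div_nonneg (Nat.cast_nonneg _) (cast_blockCoord_fst_pos _).le)

theorem backBound_le_one (i n : ℕ) : backBound i n ≤ 1 :=
  (min_le_left _ _).trans (tailMass_le_one _)

theorem sum_logWeight_Ico_le_backBound {i n : ℕ} (hn : n ≤ i) :
    ∑ r ∈ Ico (i - n) i, logWeight r ≤ backBound i n := by
  have h₁ := sum_logWeight_Ico_le_tailMass n (i - n)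
  have h₂ := sum_logWeight_Ico_le_div n (i - n)
  rw [Nat.sub_add_cancel hn] at h₁ h₂
  exact le_min h₁ h₂

theorem sum_backBound_Icc_le_of_le_snd {i m : ℕ} (hm : m ≤ (blockCoord i).2) :
    ∑ n ∈ Icc 1 m, backBound i n ≤ 3 / 4 * m := by
  have hb : (2 : ℝ) ≤ (blockCoord i).1 := by exact_mod_cast two_le_blockCoord_fst i
  have hmb : (m : ℝ) ≤ (blockCoord i).1 := by exact_mod_cast hm.trans (blockCoord_snd_le_fst i)
  set b : ℝ := ((blockCoord i).1 : ℝ)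
  have hgauss (l : ℕ) : ∑ n ∈ Icc 1 l, (n : ℝ) = l * (l + 1) / 2 := by
    induction l with
    | zero => simp
    | succ l ih => rw [sum_Icc_succ_top (by omega), ih]; push_cast; ring
  calc ∑ n ∈ Icc 1 m, backBound i n ≤ ∑ n ∈ Icc 1 m, (n : ℝ) / b := by
        refine sum_le_sum fun n hn => ?_
        rw [backBound, blockCoord_sub (by simp at hn; omega)]
        exact min_le_right _ _
    _ = m * (m + 1) / (2 * b) := by rw [← sum_div, hgauss, div_div]
    _ ≤ 3 / 4 * m := by
        rw [div_le_iff₀ (by positivity)]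
        nlinarith [mul_nonneg (Nat.cast_nonneg m : (0 : ℝ) ≤ m) (sub_nonneg.2 hmb)]

theorem sum_backBound_Icc_le {i M : ℕ} (hM : M ≤ i) :
    ∑ n ∈ Icc 1 M, backBound i n ≤ 3 / 4 * M := by
  set k := (blockCoord i).2
  rcases le_or_gt M k with hMk | hkM
  · exact sum_backBound_Icc_le_of_le_snd hMk
  have hki : k ≤ i := blockCoord_snd_le i
  have hsplit : ∑ n ∈ Icc 1 M, backBound i n =
      ∑ n ∈ Icc 1 k, backBound i n + ∑ n ∈ Ico (k + 1) (M + 1), backBound i n := by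
    have hIcc (n : ℕ) : Icc 1 n = Ioc 0 n := Finset.Icc_add_one_left_eq_Ioc 0 n
    rw [Finset.Ico_add_one_add_one_eq_Ioc, hIcc, hIcc,
      sum_Ioc_consecutive _ (Nat.zero_le k) hkM.le]
  have htail : ∑ n ∈ Ico (k + 1) (M + 1), backBound i n ≤ ((M : ℝ) - k) / 2 :=
    calc ∑ n ∈ Ico (k + 1) (M + 1), backBound i n
        ≤ ∑ n ∈ Ico (k + 1) (M + 1), tailMass (i - n) := sum_le_sum fun _ _ => min_le_left _ _
      _ = ∑ q ∈ Ico (i - M) (i - k), tailMass q := by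
        rw [sum_Ico_reflect _ _ (by omega), Nat.add_sub_add_right, Nat.add_sub_add_right]
      _ ≤ (((i - k : ℕ) : ℝ) - (i - M : ℕ)) / 2 :=
        sum_tailMass_Ico_le (by omega) (by rw [blockCoord_sub le_rfl, Nat.sub_self])
      _ = ((M : ℝ) - k) / 2 := by rw [Nat.cast_sub hki, Nat.cast_sub hM]; ring
  have hkM' : (k : ℝ) ≤ M := by exact_mod_cast hkM.le
  linarith [sum_backBound_Icc_le_of_le_snd (le_refl k)]

theorem sum_abs_prod_Icc_sub_rpow_le {w : ℕ → ℝ} (hw : ∀ q, w q = Real.exp (logWeight q))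
    {p : ℝ} (hp : 0 ≤ p) {i M : ℕ} (hM : M ≤ i) :
    ∑ n ∈ Icc 1 M, |∏ j ∈ Icc 1 n, w (i - j)| ^ p ≤
      M * (1 + 3 / 4 * (Real.exp p - 1)) := by
  have hterm : ∀ n ∈ Icc 1 M,
      |∏ j ∈ Icc 1 n, w (i - j)| ^ p ≤ 1 + backBound i n * (Real.exp p - 1) := by
    intro n hn
    rw [prod_Icc_sub_eq_exp_sum_Ico hw (by simp at hn; omega), abs_of_pos (Real.exp_pos _),
      ← Real.exp_mul]
    refine le_trans ?_ (Real.exp_mul_le_one_add_mul_sub_one (backBound_nonneg i n)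
      (backBound_le_one i n) p)
    gcongr
    exact sum_logWeight_Ico_le_backBound (by simp at hn; omega)
  have hp1 : 0 ≤ Real.exp p - 1 := by linarith [Real.add_one_le_exp p]
  calc ∑ n ∈ Icc 1 M, |∏ j ∈ Icc 1 n, w (i - j)| ^ p
      ≤ ∑ n ∈ Icc 1 M, (1 + backBound i n * (Real.exp p - 1)) := sum_le_sum hterm
    _ = M + (∑ n ∈ Icc 1 M, backBound i n) * (Real.exp p - 1) := by
      rw [sum_add_distrib, sum_mul]; simp
    _ ≤ M + 3 / 4 * M * (Real.exp p - 1) := by gcongr; exact sum_backBound_Icc_le hM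
    _ = M * (1 + 3 / 4 * (Real.exp p - 1)) := by ring

theorem backward_cesaro_mean_le {w : ℕ → ℝ} (hw : ∀ q, w q = Real.exp (logWeight q))
    {p : ℝ} (hp : 0 ≤ p) (i : ℕ) {N : ℕ} (hN : 1 ≤ N) :
    (1 / N : ℝ) * ∑ n ∈ Icc 1 (min N i), |∏ j ∈ Icc 1 n, w (i - j)| ^ p ≤
      1 + 3 / 4 * (Real.exp p - 1) := by
  have hN' : (0 : ℝ) < N := by exact_mod_cast hN
  have hmin : ((min N i : ℕ) : ℝ) ≤ N := by exact_mod_cast min_le_left N i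
  have hC : 0 ≤ 1 + 3 / 4 * (Real.exp p - 1) := by linarith [Real.add_one_le_exp p]
  rw [one_div_mul_eq_div, div_le_iff₀ hN']
  calc _ ≤ (min N i : ℕ) * (1 + 3 / 4 * (Real.exp p - 1)) :=
        sum_abs_prod_Icc_sub_rpow_le hw hp (min_le_right N i)
    _ ≤ _ := by rw [mul_comm]; gcongr

section Decoding

variable {L : ℕ → ℕ} (hL : ∀ n : ℕ, L n = n * (n + 1) / 2 + n - 2)
include hL

theorem L_add_one {m : ℕ} (hm : 1 ≤ m) : L (m + 1) = L m + m + 2 := by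
  have h₁ : m * (m + 1) / 2 * 2 = m * (m + 1) :=
    Nat.div_mul_cancel (Nat.even_mul_succ_self m).two_dvd
  have h₂ : (m + 1) * (m + 1 + 1) / 2 * 2 = (m + 1) * (m + 1 + 1) :=
    Nat.div_mul_cancel (Nat.even_mul_succ_self (m + 1)).two_dvd
  have h₃ : (m + 1) * (m + 1 + 1) = m * (m + 1) + 2 * (m + 1) := by ring
  have h₄ : 2 ≤ m * (m + 1) := by nlinarith
  rw [hL, hL]
  omega

theorem eq_L_blockCoord (q : ℕ) : q = L ((blockCoord q).1 - 1) + (blockCoord q).2 := by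
  induction q with
  | zero => simp [blockCoord, hL]
  | succ q ih =>
    have hn := two_le_blockCoord_fst q
    rw [blockCoord]
    split_ifs with h
    · simp only; omega
    · have hk := blockCoord_snd_eq_fst h
      have hL' := L_add_one hL (m := (blockCoord q).1 - 1) (by omega)
      rw [Nat.sub_add_cancel (by omega)] at hL'
      simp only [Nat.add_sub_cancel, add_zero]
      omega

theorem eq_exp_logWeight {w : ℕ → ℝ}
    (hw : ∀ n : ℕ, 2 ≤ n →
      (∀ k : ℕ, k < n → w (L (n - 1) + k) = Real.exp (1 / (n : ℝ))) ∧
        w (L (n - 1) + n) = (Real.exp 1)⁻¹) (q : ℕ) :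
    w q = Real.exp (logWeight q) := by
  have hblock := hw _ (two_le_blockCoord_fst q)
  conv_lhs => rw [eq_L_blockCoord hL q]
  unfold logWeight
  split_ifs with h
  · rw [hblock.1 _ h, one_div]
  · rw [blockCoord_snd_eq_fst h, hblock.2, Real.exp_neg]

end Decoding

/-- Let `w` be the `0`-indexed sequence obtained by concatenating, for `n = 2, 3, …`, the
blocks `(e^{1/n}, …, e^{1/n} (n times), 1/e)`; the block for `n` occupies positions
`L (n-1), …, L n - 1` where `L n = n(n+1)/2 + n - 2`.  Then
`sup_N (1/N) Σ_{n=1}^N (sup_i |w_i ⋯ w_{i+n-1}|)^p = e^p`, while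
`sup_{i,N} (1/N) Σ_{n=1}^{min{N,i}} |w_{i-n} ⋯ w_{i-1}|^p < e^p`. -/
theorem stmt15 (p : ℝ) (hp : 1 ≤ p)
    (L : ℕ → ℕ) (hL : ∀ n : ℕ, L n = n * (n + 1) / 2 + n - 2)
    (w : ℕ → ℝ)
    (hw : ∀ n : ℕ, 2 ≤ n →
      (∀ k : ℕ, k < n → w (L (n - 1) + k) = Real.exp (1 / (n : ℝ))) ∧
        w (L (n - 1) + n) = (Real.exp 1)⁻¹) :
    (⨆ N : ℕ, ⨆ _ : 1 ≤ N,
        (1 / N : ℝ) * ∑ n ∈ Finset.Icc 1 N,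
          (⨆ i : ℕ, |∏ j ∈ Finset.range n, w (i + j)|) ^ p) = Real.exp 1 ^ p ∧
    (⨆ i : ℕ, ⨆ N : ℕ, ⨆ _ : 1 ≤ N,
        (1 / N : ℝ) * ∑ n ∈ Finset.Icc 1 (min N i),
          |∏ j ∈ Finset.Icc 1 n, w (i - j)| ^ p) < Real.exp 1 ^ p := by
  have hw' := eq_exp_logWeight hL hw
  have hp0 : 0 < p := by linarith
  have hsup (n : ℕ) (hn : 2 ≤ n) : ⨆ i, |∏ j ∈ range n, w (i + j)| = Real.exp 1 :=
    iSup_abs_prod_range_eq_exp_one hw' (by omega) (hw n hn).1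
  constructor
  · refine iSup_cesaro_eq (by positivity) (fun n hn => ?_) ?_
    · rcases hn.eq_or_lt with rfl | hn
      · rw [iSup_abs_prod_range_one_eq hw']
        gcongr
        norm_num
      · rw [hsup n hn]
    · exact tendsto_const_nhds.congr' <|
        (eventually_ge_atTop 2).mono fun n hn => by simp only [hsup n hn]
  · have hC : 0 ≤ 1 + 3 / 4 * (Real.exp p - 1) := by linarith [Real.add_one_le_exp p]
    refine lt_of_le_of_lt (Real.iSup_le (fun i => Real.iSup_le (fun N => Real.iSup_le
      (fun hN => backward_cesaro_mean_le hw' hp0.le i hN) hC) hC) hC) ?_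
    rw [Real.exp_one_rpow]
    linarith [Real.one_lt_exp_iff.2 hp0]
end
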